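/- arXiv:1405.4693 — 4 statements merged into one kernel-verified Lean document; each statement's English description precedes it below -/
import Mathlib

section
/- For all x ∈ [0,1]: for every n ∈ ℕ₀, p_{2n+1}(r₁x) = r₁^n m₁^{n+1} p_{2n+1}(x) and q_{2n+1}(r₁x) = r₁^{n+1} m₁^n q_{2n+1}(x); and for every n ∈ ℕ with n ≥ 1, p_{2n}(r₁x) = (r₁m₁)^n p_{2n}(x) and q_{2n}(r₁x) = (r₁m₁)^n q_{2n}(x). -/
/-!
Both primitives commute with the contraction `S₁ t = r₁ t`: `∫₀^{r₁x} f = r₁ ∫₀^x f(r₁ ·)`, and on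
`[0, r₁ x]` the self-similarity reduces `μ` to `m₁ (S₁)_* μ`, so
`∫_{[0, r₁x]} f dμ = m₁ ∫_{[0,x]} f(r₁ ·) dμ`. Hence if `f (r₁ t) = c f t` on `[0, 1]`, the Lebesgue
primitive of `f` scales by `r₁ c` and its `μ`-primitive by `m₁ c`; following the alternating chains
from `p₀ = q₀ = 1` gives the exponents.
-/

open MeasureTheory

def ScalesBy (r : ℝ) (f : ℝ → ℝ) (c : ℝ) : Prop :=
  ∀ t ∈ Set.Icc (0 : ℝ) 1, f (r * t) = c * f t

theorem ScalesBy.intervalIntegral {r c : ℝ} {f : ℝ → ℝ} (hf : ScalesBy r f c) :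
    ScalesBy r (fun x => ∫ t in (0 : ℝ)..x, f t) (r * c) := by
  intro x hx
  have hsub : Set.uIcc 0 x ⊆ Set.Icc 0 1 := by
    rw [Set.uIcc_of_le hx.1]; exact Set.Icc_subset_Icc_right hx.2
  calc ∫ t in (0 : ℝ)..r * x, f t
      = r * ∫ t in (0 : ℝ)..x, f (r * t) := by
        simpa only [smul_eq_mul, mul_zero]
          using (intervalIntegral.smul_integral_comp_mul_left f r (a := 0) (b := x)).symm
    _ = r * ∫ t in (0 : ℝ)..x, c * f t := by
        rw [intervalIntegral.integral_congr fun t ht => hf t (hsub ht)]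
    _ = r * c * ∫ t in (0 : ℝ)..x, f t := by
        rw [intervalIntegral.integral_const_mul, mul_assoc]

theorem measure_Iic_zero_eq_zero {μ : Measure ℝ} [NullSingletonClass μ]
    (hsupp : μ (Set.Icc (0 : ℝ) 1)ᶜ = 0) : μ (Set.Iic 0) = 0 := by
  rw [← Set.Iio_union_right]
  refine measure_union_null (measure_mono_null (fun t ht => ?_) hsupp) (measure_singleton 0)
  exact fun h => (Set.mem_Iio.mp ht).not_ge h.1

section SelfSimilar

variable {μ : Measure ℝ} [NullSingletonClass μ] {r₁ r₂ m₁ m₂ : ℝ}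

/-- The second branch maps `[0, 1]` onto `[1 - r₂, 1]`, which meets `[0, r₁ x]` at most in `0`,
a `μ`-null point. -/
theorem restrict_Icc_mul_left_eq (hsupp : μ (Set.Icc (0 : ℝ) 1)ᶜ = 0)
    (hr₁ : 0 < r₁) (hr₂ : 0 < r₂) (hrsum : r₁ + r₂ ≤ 1)
    (hss : μ = ENNReal.ofReal m₁ • Measure.map (fun x => r₁ * x) μ
           + ENNReal.ofReal m₂ • Measure.map (fun x => r₂ * x + 1 - r₂) μ)
    {x : ℝ} (hx : x ≤ 1) :
    μ.restrict (Set.Icc 0 (r₁ * x))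
      = ENNReal.ofReal m₁ • (μ.restrict (Set.Icc 0 x)).map (r₁ * ·) := by
  have hS₂ : μ ((fun t => r₂ * t + 1 - r₂) ⁻¹' Set.Icc 0 (r₁ * x)) = 0 := by
    refine measure_mono_null (fun t ht => ?_) (measure_Iic_zero_eq_zero hsupp)
    have : r₂ * t + 1 - r₂ ≤ r₁ * x := ht.2
    simp only [Set.mem_Iic]
    nlinarith
  have hS₁ : (r₁ * ·) ⁻¹' Set.Icc 0 (r₁ * x) = Set.Icc 0 x := by
    rw [Set.preimage_const_mul_Icc₀ _ _ hr₁, zero_div, mul_div_cancel_left₀ _ hr₁.ne']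
  conv_lhs => rw [hss]
  rw [Measure.restrict_add, Measure.restrict_smul, Measure.restrict_smul,
    Measure.restrict_map (by fun_prop) measurableSet_Icc,
    Measure.restrict_map (by fun_prop) measurableSet_Icc, Measure.restrict_eq_zero.mpr hS₂,
    Measure.map_zero, smul_zero, add_zero, hS₁]

theorem ScalesBy.setIntegral_Icc (hsupp : μ (Set.Icc (0 : ℝ) 1)ᶜ = 0)
    (hr₁ : 0 < r₁) (hr₂ : 0 < r₂) (hm₁ : 0 < m₁) (hrsum : r₁ + r₂ ≤ 1)
    (hss : μ = ENNReal.ofReal m₁ • Measure.map (fun x => r₁ * x) μ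
           + ENNReal.ofReal m₂ • Measure.map (fun x => r₂ * x + 1 - r₂) μ)
    {f : ℝ → ℝ} {c : ℝ} (hf : ScalesBy r₁ f c) :
    ScalesBy r₁ (fun x => ∫ t in Set.Icc 0 x, f t ∂μ) (m₁ * c) := by
  intro x hx
  calc ∫ t in Set.Icc 0 (r₁ * x), f t ∂μ
      = m₁ * ∫ t in Set.Icc 0 x, f (r₁ * t) ∂μ := by
        rw [restrict_Icc_mul_left_eq hsupp hr₁ hr₂ hrsum hss hx.2, integral_smul_measure,
          (measurableEmbedding_mulLeft₀ hr₁.ne').integral_map, ENNReal.toReal_ofReal hm₁.le,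
          smul_eq_mul]
    _ = m₁ * ∫ t in Set.Icc 0 x, c * f t ∂μ := by
        rw [setIntegral_congr_fun measurableSet_Icc
          fun t ht => hf t ⟨ht.1, ht.2.trans hx.2⟩]
    _ = m₁ * c * ∫ t in Set.Icc 0 x, f t ∂μ := by
        rw [integral_const_mul, mul_assoc]

end SelfSimilar

theorem stmt_14_general
    (μ : Measure ℝ) [NullSingletonClass μ]
    (hsupp : μ (Set.Icc (0:ℝ) 1)ᶜ = 0)
    (r₁ r₂ m₁ m₂ : ℝ)
    (hr₁ : 0 < r₁) (hr₂ : 0 < r₂) (hm₁ : 0 < m₁)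
    (hrsum : r₁ + r₂ ≤ 1)
    (hss : μ = ENNReal.ofReal m₁ • Measure.map (fun x => r₁ * x) μ
           + ENNReal.ofReal m₂ • Measure.map (fun x => r₂ * x + 1 - r₂) μ)
    (p q : ℕ → ℝ → ℝ)
    (hp0 : ∀ x : ℝ, p 0 x = 1) (hq0 : ∀ x : ℝ, q 0 x = 1)
    (hpodd : ∀ (n : ℕ) (x : ℝ), p (2*n+1) x = ∫ t in Set.Icc (0:ℝ) x, p (2*n) t ∂μ)
    (hpeven : ∀ (n : ℕ) (x : ℝ), p (2*n+2) x = ∫ t in (0:ℝ)..x, p (2*n+1) t)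
    (hqodd : ∀ (n : ℕ) (x : ℝ), q (2*n+1) x = ∫ t in (0:ℝ)..x, q (2*n) t)
    (hqeven : ∀ (n : ℕ) (x : ℝ), q (2*n+2) x = ∫ t in Set.Icc (0:ℝ) x, q (2*n+1) t ∂μ) :
    ∀ x ∈ Set.Icc (0:ℝ) 1,
      (∀ n : ℕ,
        p (2*n+1) (r₁*x) = r₁^n * m₁^(n+1) * p (2*n+1) x ∧
        q (2*n+1) (r₁*x) = r₁^(n+1) * m₁^n * q (2*n+1) x) ∧
      (∀ n : ℕ, 1 ≤ n →
        p (2*n) (r₁*x) = (r₁*m₁)^n * p (2*n) x ∧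
        q (2*n) (r₁*x) = (r₁*m₁)^n * q (2*n) x) := by
  have hμ {f : ℝ → ℝ} {c : ℝ} (hf : ScalesBy r₁ f c) :
      ScalesBy r₁ (fun x => ∫ t in Set.Icc 0 x, f t ∂μ) (m₁ * c) :=
    hf.setIntegral_Icc hsupp hr₁ hr₂ hm₁ hrsum hss
  have hodd : ∀ n, ScalesBy r₁ (p (2*n)) ((r₁*m₁)^n) → ScalesBy r₁ (q (2*n)) ((r₁*m₁)^n) →
      ScalesBy r₁ (p (2*n+1)) (r₁^n * m₁^(n+1)) ∧ ScalesBy r₁ (q (2*n+1)) (r₁^(n+1) * m₁^n) := by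
    intro n hp hq
    rw [funext (hpodd n), funext (hqodd n)]
    exact ⟨by convert hμ hp using 1; ring, by convert hq.intervalIntegral using 1; ring⟩
  have hscale : ∀ n, (ScalesBy r₁ (p (2*n)) ((r₁*m₁)^n) ∧ ScalesBy r₁ (q (2*n)) ((r₁*m₁)^n)) ∧
      (ScalesBy r₁ (p (2*n+1)) (r₁^n * m₁^(n+1)) ∧ ScalesBy r₁ (q (2*n+1)) (r₁^(n+1) * m₁^n)) := by
    intro n
    induction n with
    | zero =>
      have hp : ScalesBy r₁ (p 0) 1 := fun t _ => by rw [hp0, hp0, one_mul]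
      have hq : ScalesBy r₁ (q 0) 1 := fun t _ => by rw [hq0, hq0, one_mul]
      exact ⟨⟨hp, hq⟩, hodd 0 (by simpa using hp) (by simpa using hq)⟩
    | succ n ih =>
      obtain ⟨-, hp, hq⟩ := ih
      have heven : ScalesBy r₁ (p (2*(n+1))) ((r₁*m₁)^(n+1)) ∧
          ScalesBy r₁ (q (2*(n+1))) ((r₁*m₁)^(n+1)) := by
        rw [mul_add_one, funext (hpeven n), funext (hqeven n)]
        exact ⟨by convert hp.intervalIntegral using 1; ring, by convert hμ hq using 1; ring⟩
      exact ⟨heven, hodd (n+1) heven.1 heven.2⟩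
  intro x hx
  exact ⟨fun n => ⟨(hscale n).2.1 x hx, (hscale n).2.2 x hx⟩,
    fun n _ => ⟨(hscale n).1.1 x hx, (hscale n).1.2 x hx⟩⟩

theorem stmt_14
    (μ : Measure ℝ) [IsProbabilityMeasure μ] [NullSingletonClass μ]
    (hsupp : μ (Set.Icc (0:ℝ) 1)ᶜ = 0)
    (r₁ r₂ m₁ m₂ : ℝ)
    (hr₁ : 0 < r₁) (hr₂ : 0 < r₂) (hm₁ : 0 < m₁) (hm₂ : 0 < m₂)
    (hrsum : r₁ + r₂ ≤ 1) (hmsum : m₁ + m₂ = 1)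
    (hss : μ = ENNReal.ofReal m₁ • Measure.map (fun x => r₁ * x) μ
           + ENNReal.ofReal m₂ • Measure.map (fun x => r₂ * x + 1 - r₂) μ)
    (p q : ℕ → ℝ → ℝ)
    (hp0 : ∀ x : ℝ, p 0 x = 1) (hq0 : ∀ x : ℝ, q 0 x = 1)
    (hpodd : ∀ (n : ℕ) (x : ℝ), p (2*n+1) x = ∫ t in Set.Icc (0:ℝ) x, p (2*n) t ∂μ)
    (hpeven : ∀ (n : ℕ) (x : ℝ), p (2*n+2) x = ∫ t in (0:ℝ)..x, p (2*n+1) t)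
    (hqodd : ∀ (n : ℕ) (x : ℝ), q (2*n+1) x = ∫ t in (0:ℝ)..x, q (2*n) t)
    (hqeven : ∀ (n : ℕ) (x : ℝ), q (2*n+2) x = ∫ t in Set.Icc (0:ℝ) x, q (2*n+1) t ∂μ) :
    ∀ x ∈ Set.Icc (0:ℝ) 1,
      (∀ n : ℕ,
        p (2*n+1) (r₁*x) = r₁^n * m₁^(n+1) * p (2*n+1) x ∧
        q (2*n+1) (r₁*x) = r₁^(n+1) * m₁^n * q (2*n+1) x) ∧
      (∀ n : ℕ, 1 ≤ n →
        p (2*n) (r₁*x) = (r₁*m₁)^n * p (2*n) x ∧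
        q (2*n) (r₁*x) = (r₁*m₁)^n * q (2*n) x) :=
  stmt_14_general μ hsupp r₁ r₂ m₁ m₂ hr₁ hr₂ hm₁ hrsum hss p q hp0 hq0 hpodd hpeven hqodd hqeven
end

section
/- For all x ∈ [0,1] and z ∈ ℝ: c_{λ,μ}(z, r₁x) = c_{λ,μ}(√(r₁m₁)·z, x); s_{λ,μ}(z, r₁x) = √(r₁/m₁)·s_{λ,μ}(√(r₁m₁)·z, x); s_{μ,λ}(z, r₁x) = √(m₁/r₁)·s_{μ,λ}(√(r₁m₁)·z, x); and c_{μ,λ}(z, r₁x) = c_{μ,λ}(√(r₁m₁)·z, x). -/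
/-!
On `[0, r₁]` the self-similar measure `μ` is `m₁` times the image of `μ` under `S₁`: the `S₂`-part
lives on `[1 - r₂, 1]`, which meets `[0, r₁]` in at most one point, and `μ` has no atoms. Lebesgue
measure on `[0, r₁]` is likewise `r₁` times its image under `S₁`. So every integration against `μ`
multiplies the scaling factor under `x ↦ r₁ x` by `m₁`, and every integration against Lebesgue
measure multiplies it by `r₁`: `p_{2n}` and `q_{2n}` scale by `(r₁ m₁)ⁿ`, `p_{2n+1}` by
`m₁ (r₁ m₁)ⁿ` and `q_{2n+1}` by `r₁ (r₁ m₁)ⁿ`. Substituting into the series absorbs `(r₁ m₁)ⁿ`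
into `z ↦ √(r₁ m₁) z`.
-/

open MeasureTheory Set

def ScalesOn (r c : ℝ) (f : ℝ → ℝ) : Prop :=
  ∀ x ∈ Icc (0 : ℝ) 1, f (r * x) = c * f x

theorem scalesOn_const (r a : ℝ) : ScalesOn r 1 fun _ => a := fun _ _ => (one_mul a).symm

theorem ScalesOn.intervalIntegral {r c : ℝ} {g F : ℝ → ℝ} (hg : ScalesOn r c g)
    (hF : ∀ x, F x = ∫ t in (0 : ℝ)..x, g t) : ScalesOn r (r * c) F := by
  intro x hx
  have hcongr : (∫ t in (0 : ℝ)..x, g (r * t)) = ∫ t in (0 : ℝ)..x, c * g t :=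
    intervalIntegral.integral_congr fun t ht => by
      rw [uIcc_of_le hx.1] at ht
      exact hg t ⟨ht.1, ht.2.trans hx.2⟩
  have hsubst : r * (∫ t in (0 : ℝ)..x, g (r * t)) = ∫ t in (0 : ℝ)..r * x, g t := by
    simpa only [mul_zero, smul_eq_mul] using
      intervalIntegral.smul_integral_comp_mul_left (a := 0) (b := x) g r
  rw [hF, hF, ← hsubst, hcongr, intervalIntegral.integral_const_mul, mul_assoc]

theorem ScalesOn.setIntegral {μ : Measure ℝ} {r m c : ℝ} {g F : ℝ → ℝ} (hg : ScalesOn r c g)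
    (hr : r ≠ 0) (hm : 0 ≤ m)
    (hμ : ∀ x ∈ Icc (0 : ℝ) 1,
      μ.restrict (Icc 0 (r * x)) = ENNReal.ofReal m • (μ.restrict (Icc 0 x)).map (r * ·))
    (hF : ∀ x, F x = ∫ t in Icc (0 : ℝ) x, g t ∂μ) : ScalesOn r (m * c) F := by
  intro x hx
  have hcongr : (∫ t in Icc (0 : ℝ) x, g (r * t) ∂μ) = ∫ t in Icc (0 : ℝ) x, c * g t ∂μ :=
    setIntegral_congr_fun measurableSet_Icc fun t ht => hg t ⟨ht.1, ht.2.trans hx.2⟩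
  rw [hF, hF, hμ x hx, integral_smul_measure, (measurableEmbedding_mulLeft₀ hr).integral_map,
    hcongr, integral_const_mul, ENNReal.toReal_ofReal hm, smul_eq_mul, mul_assoc]

theorem Real.sqrt_div_mul_sqrt_mul {a b : ℝ} (ha : 0 ≤ a) (hb : 0 < b) :
    √(a / b) * √(a * b) = a := by
  rw [← Real.sqrt_mul (div_nonneg ha hb.le), show a / b * (a * b) = a ^ 2 by field_simp, Real.sqrt_sq ha]

theorem restrict_Icc_mul_eq_of_selfSimilar {μ : Measure ℝ} [NullSingletonClass μ]
    (hsupp : μ (Icc (0 : ℝ) 1)ᶜ = 0) {r₁ r₂ m₁ m₂ : ℝ} (hr₁ : 0 < r₁) (hr₂ : 0 < r₂)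
    (hrsum : r₁ + r₂ ≤ 1)
    (hss : μ = ENNReal.ofReal m₁ • Measure.map (fun x => r₁ * x) μ
           + ENNReal.ofReal m₂ • Measure.map (fun x => r₂ * x + 1 - r₂) μ)
    {x : ℝ} (hx : x ∈ Icc (0 : ℝ) 1) :
    μ.restrict (Icc 0 (r₁ * x)) = ENNReal.ofReal m₁ • (μ.restrict (Icc 0 x)).map (r₁ * ·) := by
  have hS₁ : (r₁ * ·) ⁻¹' Icc 0 (r₁ * x) = Icc 0 x := by
    rw [preimage_const_mul_Icc₀ _ _ hr₁, zero_div, mul_div_cancel_left₀ _ hr₁.ne']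
  have hS₂ : μ ((fun t => r₂ * t + 1 - r₂) ⁻¹' Icc 0 (r₁ * x)) = 0 := by
    refine measure_mono_null (fun t ht => ?_) (measure_union_null hsupp (measure_singleton 0))
    by_cases htI : t ∈ Icc (0 : ℝ) 1
    · have : r₁ * x ≤ r₁ := mul_le_of_le_one_right hr₁.le hx.2
      exact Or.inr (le_antisymm (by nlinarith [ht.2, htI.1]) htI.1)
    · exact Or.inl htI
  conv_lhs => rw [hss]
  rw [Measure.restrict_add, Measure.restrict_smul, Measure.restrict_smul,
    Measure.restrict_map (by fun_prop) measurableSet_Icc, hS₁,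
    Measure.restrict_map (by fun_prop) measurableSet_Icc, Measure.restrict_eq_zero.mpr hS₂,
    Measure.map_zero, smul_zero, add_zero]

theorem stmt_15_general
    (μ : Measure ℝ) [NullSingletonClass μ]
    (hsupp : μ (Set.Icc (0:ℝ) 1)ᶜ = 0)
    (r₁ r₂ m₁ m₂ : ℝ)
    (hr₁ : 0 < r₁) (hr₂ : 0 < r₂) (hm₁ : 0 < m₁)
    (hrsum : r₁ + r₂ ≤ 1)
    (hss : μ = ENNReal.ofReal m₁ • Measure.map (fun x => r₁ * x) μ
           + ENNReal.ofReal m₂ • Measure.map (fun x => r₂ * x + 1 - r₂) μ)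
    (p q : ℕ → ℝ → ℝ)
    (hp0 : ∀ x : ℝ, p 0 x = 1) (hq0 : ∀ x : ℝ, q 0 x = 1)
    (hpodd : ∀ (n : ℕ) (x : ℝ), p (2*n+1) x = ∫ t in Set.Icc (0:ℝ) x, p (2*n) t ∂μ)
    (hpeven : ∀ (n : ℕ) (x : ℝ), p (2*n+2) x = ∫ t in (0:ℝ)..x, p (2*n+1) t)
    (hqodd : ∀ (n : ℕ) (x : ℝ), q (2*n+1) x = ∫ t in (0:ℝ)..x, q (2*n) t)
    (hqeven : ∀ (n : ℕ) (x : ℝ), q (2*n+2) x = ∫ t in Set.Icc (0:ℝ) x, q (2*n+1) t ∂μ)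
    (Sp Sq Cp Cq : ℝ → ℝ → ℝ)
    (hSp : ∀ (z x : ℝ), Sp z x = ∑' n : ℕ, (-1:ℝ)^n * z^(2*n+1) * p (2*n+1) x)
    (hSq : ∀ (z x : ℝ), Sq z x = ∑' n : ℕ, (-1:ℝ)^n * z^(2*n+1) * q (2*n+1) x)
    (hCp : ∀ (z x : ℝ), Cp z x = ∑' n : ℕ, (-1:ℝ)^n * z^(2*n) * p (2*n) x)
    (hCq : ∀ (z x : ℝ), Cq z x = ∑' n : ℕ, (-1:ℝ)^n * z^(2*n) * q (2*n) x) :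
    ∀ x ∈ Set.Icc (0:ℝ) 1, ∀ z : ℝ,
      Cp z (r₁*x) = Cp (Real.sqrt (r₁*m₁) * z) x ∧
      Sq z (r₁*x) = Real.sqrt (r₁/m₁) * Sq (Real.sqrt (r₁*m₁) * z) x ∧
      Sp z (r₁*x) = Real.sqrt (m₁/r₁) * Sp (Real.sqrt (r₁*m₁) * z) x ∧
      Cq z (r₁*x) = Cq (Real.sqrt (r₁*m₁) * z) x := by
  have hμ := fun x (hx : x ∈ Icc (0 : ℝ) 1) =>
    restrict_Icc_mul_eq_of_selfSimilar hsupp hr₁ hr₂ hrsum hss hx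
  have hpOdd {n : ℕ} (h : ScalesOn r₁ ((r₁ * m₁) ^ n) (p (2 * n))) :=
    h.setIntegral hr₁.ne' hm₁.le hμ (hpodd n)
  have hqOdd {n : ℕ} (h : ScalesOn r₁ ((r₁ * m₁) ^ n) (q (2 * n))) := h.intervalIntegral (hqodd n)
  have hEven (n : ℕ) :
      ScalesOn r₁ ((r₁ * m₁) ^ n) (p (2 * n)) ∧ ScalesOn r₁ ((r₁ * m₁) ^ n) (q (2 * n)) := by
    induction n with
    | zero => exact ⟨funext hp0 ▸ scalesOn_const r₁ 1, funext hq0 ▸ scalesOn_const r₁ 1⟩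
    | succ n ih =>
      rw [show 2 * (n + 1) = 2 * n + 2 by ring, pow_succ]
      constructor
      · convert (hpOdd ih.1).intervalIntegral (hpeven n) using 1; ring
      · convert (hqOdd ih.2).setIntegral hr₁.ne' hm₁.le hμ (hqeven n) using 1; ring
  intro x hx z
  have hr₁s := Real.sqrt_div_mul_sqrt_mul hr₁.le hm₁
  have hm₁s := mul_comm m₁ r₁ ▸ Real.sqrt_div_mul_sqrt_mul hm₁.le hr₁
  set s := Real.sqrt (r₁ * m₁)
  have hs : s ^ 2 = r₁ * m₁ := Real.sq_sqrt (by positivity)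
  refine ⟨?_, ?_, ?_, ?_⟩
  · rw [hCp, hCp]
    exact tsum_congr fun n => by rw [(hEven n).1 x hx, ← hs]; ring
  · rw [hSq, hSq, ← tsum_mul_left]
    refine tsum_congr fun n => ?_
    rw [hqOdd (hEven n).2 x hx, ← hs]
    linear_combination (-(-1) ^ n * z ^ (2 * n + 1) * (s ^ 2) ^ n * q (2 * n + 1) x) * hr₁s
  · rw [hSp, hSp, ← tsum_mul_left]
    refine tsum_congr fun n => ?_
    rw [hpOdd (hEven n).1 x hx, ← hs]
    linear_combination (-(-1) ^ n * z ^ (2 * n + 1) * (s ^ 2) ^ n * p (2 * n + 1) x) * hm₁s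
  · rw [hCq, hCq]
    exact tsum_congr fun n => by rw [(hEven n).2 x hx, ← hs]; ring

theorem stmt_15
    (μ : Measure ℝ) [IsProbabilityMeasure μ] [NullSingletonClass μ]
    (hsupp : μ (Set.Icc (0:ℝ) 1)ᶜ = 0)
    (r₁ r₂ m₁ m₂ : ℝ)
    (hr₁ : 0 < r₁) (hr₂ : 0 < r₂) (hm₁ : 0 < m₁) (hm₂ : 0 < m₂)
    (hrsum : r₁ + r₂ ≤ 1) (hmsum : m₁ + m₂ = 1)
    (hss : μ = ENNReal.ofReal m₁ • Measure.map (fun x => r₁ * x) μ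
           + ENNReal.ofReal m₂ • Measure.map (fun x => r₂ * x + 1 - r₂) μ)
    (p q : ℕ → ℝ → ℝ)
    (hp0 : ∀ x : ℝ, p 0 x = 1) (hq0 : ∀ x : ℝ, q 0 x = 1)
    (hpodd : ∀ (n : ℕ) (x : ℝ), p (2*n+1) x = ∫ t in Set.Icc (0:ℝ) x, p (2*n) t ∂μ)
    (hpeven : ∀ (n : ℕ) (x : ℝ), p (2*n+2) x = ∫ t in (0:ℝ)..x, p (2*n+1) t)
    (hqodd : ∀ (n : ℕ) (x : ℝ), q (2*n+1) x = ∫ t in (0:ℝ)..x, q (2*n) t)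
    (hqeven : ∀ (n : ℕ) (x : ℝ), q (2*n+2) x = ∫ t in Set.Icc (0:ℝ) x, q (2*n+1) t ∂μ)
    (Sp Sq Cp Cq : ℝ → ℝ → ℝ)
    (hSp : ∀ (z x : ℝ), Sp z x = ∑' n : ℕ, (-1:ℝ)^n * z^(2*n+1) * p (2*n+1) x)
    (hSq : ∀ (z x : ℝ), Sq z x = ∑' n : ℕ, (-1:ℝ)^n * z^(2*n+1) * q (2*n+1) x)
    (hCp : ∀ (z x : ℝ), Cp z x = ∑' n : ℕ, (-1:ℝ)^n * z^(2*n) * p (2*n) x)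
    (hCq : ∀ (z x : ℝ), Cq z x = ∑' n : ℕ, (-1:ℝ)^n * z^(2*n) * q (2*n) x) :
    ∀ x ∈ Set.Icc (0:ℝ) 1, ∀ z : ℝ,
      Cp z (r₁*x) = Cp (Real.sqrt (r₁*m₁) * z) x ∧
      Sq z (r₁*x) = Real.sqrt (r₁/m₁) * Sq (Real.sqrt (r₁*m₁) * z) x ∧
      Sp z (r₁*x) = Real.sqrt (m₁/r₁) * Sp (Real.sqrt (r₁*m₁) * z) x ∧
      Cq z (r₁*x) = Cq (Real.sqrt (r₁*m₁) * z) x :=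
  stmt_15_general μ hsupp r₁ r₂ m₁ m₂ hr₁ hr₂ hm₁ hrsum hss p q hp0 hq0 hpodd hpeven hqodd hqeven Sp
    Sq Cp Cq hSp hSq hCp hCq
end

section
/- Writing p_j := p_j(1) and q_j := q_j(1), the following recursions hold: (i) for every n ∈ ℕ₀, p_{2n+1} = Σ_{i=0}^n r₁^i m₁^{i+1} (r₂m₂)^{n−i} p_{2i+1} q_{2n−2i} + Σ_{i=0}^n (r₁m₁)^i r₂^{n−i} m₂^{n−i+1} p_{2i} p_{2n−2i+1} + (1−(r₁+r₂))·Σ_{i=0}^{n−1} r₁^i m₁^{i+1} r₂^{n−i−1} m₂^{n−i} p_{2i+1} p_{2n−2i−1}; (ii) for every n ≥ 1, p_{2n} = Σ_{i=0}^n (r₁m₁)^i (r₂m₂)^{n−i} p_{2i} p_{2n−2i} + Σ_{i=0}^{n−1} r₁^i m₁^{i+1} r₂^{n−i} m₂^{n−i−1} p_{2i+1} q_{2n−2i−1} + (1−(r₁+r₂))·Σ_{i=0}^{n−1} r₁^i m₁^{i+1} (r₂m₂)^{n−i−1} p_{2i+1} p_{2n−2i−2}; (iii) for every n ∈ ℕ₀,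 q_{2n+1} = Σ_{i=0}^n r₁^{i+1} m₁^i (r₂m₂)^{n−i} q_{2i+1} p_{2n−2i} + Σ_{i=0}^n (r₁m₁)^i r₂^{n−i+1} m₂^{n−i} q_{2i} q_{2n−2i+1} + (1−(r₁+r₂))·Σ_{i=0}^n (r₁m₁)^i (r₂m₂)^{n−i} q_{2i} p_{2n−2i}; (iv) for every n ≥ 1, q_{2n} = Σ_{i=0}^n (r₁m₁)^i (r₂m₂)^{n−i} q_{2i} q_{2n−2i} + Σ_{i=0}^{n−1} r₁^{i+1} m₁^i r₂^{n−i−1} m₂^{n−i} q_{2i+1} p_{2n−2i−1} + (1−(r₁+r₂))·Σ_{i=0}^{n−1} (r₁m₁)^i r₂^{n−i−1} m₂^{n−i} q_{2i} p_{2n−2i−1}. A sum over an empty index range is 0. -/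
open MeasureTheory Set
set_option linter.unusedSectionVars false
set_option maxHeartbeats 1000000
set_option linter.unusedVariables false

namespace Stmt17Aux

variable {μ : Measure ℝ} [IsProbabilityMeasure μ] [NullSingletonClass μ]
  {r₁ r₂ m₁ m₂ : ℝ}

lemma null_Iic (hsupp : μ (Set.Icc (0:ℝ) 1)ᶜ = 0) : μ (Iic (0:ℝ)) = 0 := by
  have h1 : μ (Iio (0:ℝ)) = 0 := by
    refine measure_mono_null (fun t ht => ?_) hsupp
    simp only [mem_Iio] at ht
    simp only [mem_compl_iff, mem_Icc, not_and_or, not_le]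
    exact Or.inl ht
  have h2 : Iic (0:ℝ) = Iio 0 ∪ {0} := by
    ext t; simp [le_iff_lt_or_eq]
  rw [h2]
  exact measure_union_null h1 (measure_singleton 0)

lemma null_Ioi (hsupp : μ (Set.Icc (0:ℝ) 1)ᶜ = 0) : μ (Ioi (1:ℝ)) = 0 := by
  refine measure_mono_null (fun t ht => ?_) hsupp
  simp only [mem_Ioi] at ht
  simp only [mem_compl_iff, mem_Icc, not_and_or, not_le]
  exact Or.inr ht

/-- bounded measurable implies integrable on a finite measure -/
lemma integrable_of_bdd {ν : Measure ℝ} [IsFiniteMeasure ν] {f : ℝ → ℝ} (hf : Measurable f)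
    (C : ℝ) (hC : ∀ x, |f x| ≤ C) : Integrable f ν := by
  refine Integrable.mono' (integrable_const C) hf.aestronglyMeasurable ?_
  exact Filter.Eventually.of_forall fun x => by simpa using hC x

lemma integrableOn_Icc (f : ℝ → ℝ) (hf : Monotone f) (b : ℝ) :
    IntegrableOn f (Icc 0 b) μ := by
  refine Integrable.mono' (integrable_const (max |f 0| |f b|))
    (hf.measurable.aestronglyMeasurable) ?_
  refine (ae_restrict_iff' measurableSet_Icc).2 (Filter.Eventually.of_forall fun x hx => ?_)
  rcases hx with ⟨h0, h1⟩
  rw [Real.norm_eq_abs, abs_le]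
  constructor
  · calc -max |f 0| |f b| ≤ -|f 0| := by simp [le_max_left]
    _ ≤ f 0 := neg_abs_le _
    _ ≤ f x := hf h0
  · calc f x ≤ f b := hf h1
    _ ≤ |f b| := le_abs_self _
    _ ≤ max |f 0| |f b| := le_max_right _ _

lemma indicator_bdd (f : ℝ → ℝ) (hf : Monotone f) (c : ℝ) (x : ℝ) :
    |(Icc (0:ℝ) c).indicator f x| ≤ max (max |f 0| |f c|) 0 := by
  by_cases hx : x ∈ Icc (0:ℝ) c
  · rw [indicator_of_mem hx]
    rcases hx with ⟨h0, h1⟩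
    refine le_trans ?_ (le_max_left _ _)
    rw [abs_le]
    refine ⟨?_, ?_⟩
    · calc -max |f 0| |f c| ≤ -|f 0| := by simp [le_max_left]
      _ ≤ f 0 := neg_abs_le _
      _ ≤ f x := hf h0
    · calc f x ≤ f c := hf h1
      _ ≤ |f c| := le_abs_self _
      _ ≤ max |f 0| |f c| := le_max_right _ _
  · rw [indicator_of_notMem hx]; simp

lemma muint_split
    (hr₁ : 0 < r₁) (hr₂ : 0 < r₂) (hm₁ : 0 < m₁) (hm₂ : 0 < m₂)
    (hss : μ = ENNReal.ofReal m₁ • Measure.map (fun x => r₁ * x) μ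
           + ENNReal.ofReal m₂ • Measure.map (fun x => r₂ * x + 1 - r₂) μ)
    (f : ℝ → ℝ) (hf : Monotone f) (c : ℝ) :
    ∫ t in Icc (0:ℝ) c, f t ∂μ
      = m₁ * ∫ t in (fun x => r₁ * x) ⁻¹' (Icc (0:ℝ) c), f (r₁ * t) ∂μ
      + m₂ * ∫ t in (fun x => r₂ * x + 1 - r₂) ⁻¹' (Icc (0:ℝ) c), f (r₂ * t + 1 - r₂) ∂μ := by
  have hfm : Measurable f := hf.measurable
  have hgm : Measurable ((Icc (0:ℝ) c).indicator f) := hfm.indicator measurableSet_Icc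
  have hS₁ : Measurable (fun x : ℝ => r₁ * x) := measurable_const_mul r₁
  have hS₂ : Measurable (fun x : ℝ => r₂ * x + 1 - r₂) :=
    ((measurable_const_mul r₂).add_const 1).sub_const r₂
  set C := max (max |f 0| |f c|) 0 with hCdef
  have hbd : ∀ x, |(Icc (0:ℝ) c).indicator f x| ≤ C := indicator_bdd f hf c
  have hint1 : Integrable ((Icc (0:ℝ) c).indicator f) (Measure.map (fun x => r₁ * x) μ) := by
    rw [integrable_map_measure hgm.aestronglyMeasurable hS₁.aemeasurable]
    exact integrable_of_bdd (hgm.comp hS₁) C (fun x => hbd _)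
  have hint2 : Integrable ((Icc (0:ℝ) c).indicator f) (Measure.map (fun x => r₂ * x + 1 - r₂) μ) := by
    rw [integrable_map_measure hgm.aestronglyMeasurable hS₂.aemeasurable]
    exact integrable_of_bdd (hgm.comp hS₂) C (fun x => hbd _)
  have e1 : ENNReal.ofReal m₁ ≠ 0 := by simp [hm₁, ENNReal.ofReal_eq_zero, not_le]
  have e2 : ENNReal.ofReal m₁ ≠ ⊤ := ENNReal.ofReal_ne_top
  have e3 : ENNReal.ofReal m₂ ≠ 0 := by simp [hm₂, ENNReal.ofReal_eq_zero, not_le]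
  have e4 : ENNReal.ofReal m₂ ≠ ⊤ := ENNReal.ofReal_ne_top
  calc ∫ t in Icc (0:ℝ) c, f t ∂μ
      = ∫ t, (Icc (0:ℝ) c).indicator f t ∂μ := (integral_indicator measurableSet_Icc).symm
    _ = ∫ t, (Icc (0:ℝ) c).indicator f t
          ∂(ENNReal.ofReal m₁ • Measure.map (fun x => r₁ * x) μ
            + ENNReal.ofReal m₂ • Measure.map (fun x => r₂ * x + 1 - r₂) μ) := by rw [← hss]
    _ = m₁ * ∫ t in (fun x => r₁ * x) ⁻¹' (Icc (0:ℝ) c), f (r₁ * t) ∂μ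
      + m₂ * ∫ t in (fun x => r₂ * x + 1 - r₂) ⁻¹' (Icc (0:ℝ) c), f (r₂ * t + 1 - r₂) ∂μ := by
        rw [integral_add_measure ((integrable_smul_measure e1 e2).2 hint1)
              ((integrable_smul_measure e3 e4).2 hint2),
            integral_smul_measure, integral_smul_measure,
            integral_map hS₁.aemeasurable hgm.aestronglyMeasurable,
            integral_map hS₂.aemeasurable hgm.aestronglyMeasurable]
        have k1 : ∀ x : ℝ, (Icc (0:ℝ) c).indicator f (r₁ * x)
            = ((fun x : ℝ => r₁ * x) ⁻¹' (Icc (0:ℝ) c)).indicator (fun t => f (r₁ * t)) x :=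
          fun x => (Set.indicator_comp_right (fun x : ℝ => r₁ * x) (s := Icc (0:ℝ) c) (g := f)).symm
        have k2 : ∀ x : ℝ, (Icc (0:ℝ) c).indicator f (r₂ * x + 1 - r₂)
            = ((fun x : ℝ => r₂ * x + 1 - r₂) ⁻¹' (Icc (0:ℝ) c)).indicator
              (fun t => f (r₂ * t + 1 - r₂)) x :=
          fun x => (Set.indicator_comp_right (fun x : ℝ => r₂ * x + 1 - r₂)
            (s := Icc (0:ℝ) c) (g := f)).symm
        simp only [k1, k2]
        rw [integral_indicator (hS₁ measurableSet_Icc), integral_indicator (hS₂ measurableSet_Icc)]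
        rw [ENNReal.toReal_ofReal hm₁.le, ENNReal.toReal_ofReal hm₂.le]
        simp [smul_eq_mul]


lemma muint_L1
    (hsupp : μ (Set.Icc (0:ℝ) 1)ᶜ = 0)
    (hr₁ : 0 < r₁) (hr₂ : 0 < r₂) (hm₁ : 0 < m₁) (hm₂ : 0 < m₂) (hrsum : r₁ + r₂ ≤ 1)
    (hss : μ = ENNReal.ofReal m₁ • Measure.map (fun x => r₁ * x) μ
           + ENNReal.ofReal m₂ • Measure.map (fun x => r₂ * x + 1 - r₂) μ)
    (f : ℝ → ℝ) (hf : Monotone f) {x : ℝ} (hx : x ∈ Icc (0:ℝ) 1) :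
    ∫ t in Icc (0:ℝ) (r₁*x), f t ∂μ = m₁ * ∫ t in Icc (0:ℝ) x, f (r₁*t) ∂μ := by
  rw [muint_split hr₁ hr₂ hm₁ hm₂ hss f hf (r₁*x)]
  have hpre1 : (fun t : ℝ => r₁ * t) ⁻¹' (Icc (0:ℝ) (r₁*x)) = Icc 0 x := by
    ext t
    simp only [mem_preimage, mem_Icc]
    constructor
    · rintro ⟨h0, h1⟩
      constructor <;> nlinarith
    · rintro ⟨h0, h1⟩
      constructor <;> nlinarith
  have hnull : μ ((fun t : ℝ => r₂ * t + 1 - r₂) ⁻¹' (Icc (0:ℝ) (r₁*x))) = 0 := by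
    refine measure_mono_null (fun t ht => ?_) (null_Iic hsupp)
    simp only [mem_preimage, mem_Icc] at ht
    simp only [mem_Iic]
    nlinarith [ht.2, hx.2, mul_nonneg hr₁.le (sub_nonneg.mpr hx.2)]
  have h2 : ∫ t in (fun t : ℝ => r₂ * t + 1 - r₂) ⁻¹' (Icc (0:ℝ) (r₁*x)),
      f (r₂ * t + 1 - r₂) ∂μ = 0 := by
    rw [Measure.restrict_eq_zero.mpr hnull]
    exact integral_zero_measure _
  rw [hpre1, h2, mul_zero, add_zero]

lemma muint_L2
    (hsupp : μ (Set.Icc (0:ℝ) 1)ᶜ = 0)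
    (hr₁ : 0 < r₁) (hr₂ : 0 < r₂) (hm₁ : 0 < m₁) (hm₂ : 0 < m₂) (hrsum : r₁ + r₂ ≤ 1)
    (hss : μ = ENNReal.ofReal m₁ • Measure.map (fun x => r₁ * x) μ
           + ENNReal.ofReal m₂ • Measure.map (fun x => r₂ * x + 1 - r₂) μ)
    (f : ℝ → ℝ) (hf : Monotone f) {x : ℝ} (hx : x ∈ Icc (0:ℝ) 1) :
    ∫ t in Icc (0:ℝ) (r₂*x+1-r₂), f t ∂μ
      = m₁ * ∫ t in Icc (0:ℝ) 1, f (r₁*t) ∂μ + m₂ * ∫ t in Icc (0:ℝ) x, f (r₂*t+1-r₂) ∂μ := by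
  rw [muint_split hr₁ hr₂ hm₁ hm₂ hss f hf (r₂*x+1-r₂)]
  have hae1 : ((fun t : ℝ => r₁ * t) ⁻¹' (Icc (0:ℝ) (r₂*x+1-r₂))) =ᵐ[μ] Icc (0:ℝ) 1 := by
    rw [ae_eq_set]
    constructor
    · refine measure_mono_null (fun t ht => ?_) (null_Ioi hsupp)
      simp only [mem_diff, mem_preimage, mem_Icc, not_and_or, not_le, mem_Ioi] at ht ⊢
      rcases ht with ⟨⟨h0, h1⟩, h2⟩
      rcases h2 with h | h
      · nlinarith
      · exact h
    · have : Icc (0:ℝ) 1 \ ((fun t : ℝ => r₁ * t) ⁻¹' (Icc (0:ℝ) (r₂*x+1-r₂))) = ∅ := by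
        rw [eq_empty_iff_forall_notMem]
        intro t ht
        simp only [mem_diff, mem_Icc, mem_preimage, not_and_or, not_le] at ht
        rcases ht with ⟨⟨h0, h1⟩, h2⟩
        rcases h2 with h | h
        · nlinarith
        · nlinarith [hx.1]
      rw [this]; exact measure_empty
  have hae2 : ((fun t : ℝ => r₂ * t + 1 - r₂) ⁻¹' (Icc (0:ℝ) (r₂*x+1-r₂))) =ᵐ[μ] Icc (0:ℝ) x := by
    rw [ae_eq_set]
    constructor
    · refine measure_mono_null (fun t ht => ?_) (null_Iic hsupp)
      simp only [mem_diff, mem_preimage, mem_Icc, not_and_or, not_le, mem_Iic] at ht ⊢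
      rcases ht with ⟨⟨h0, h1⟩, h2⟩
      rcases h2 with h | h
      · linarith
      · nlinarith
    · have : Icc (0:ℝ) x \ ((fun t : ℝ => r₂ * t + 1 - r₂) ⁻¹' (Icc (0:ℝ) (r₂*x+1-r₂))) = ∅ := by
        rw [eq_empty_iff_forall_notMem]
        intro t ht
        simp only [mem_diff, mem_Icc, mem_preimage, not_and_or, not_le] at ht
        rcases ht with ⟨⟨h0, h1⟩, h2⟩
        rcases h2 with h | h
        · nlinarith
        · nlinarith
      rw [this]; exact measure_empty
  rw [setIntegral_congr_set hae1, setIntegral_congr_set hae2]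

lemma null_gap
    (hsupp : μ (Set.Icc (0:ℝ) 1)ᶜ = 0)
    (hr₁ : 0 < r₁) (hr₂ : 0 < r₂)
    (hss : μ = ENNReal.ofReal m₁ • Measure.map (fun x => r₁ * x) μ
           + ENNReal.ofReal m₂ • Measure.map (fun x => r₂ * x + 1 - r₂) μ) :
    μ (Ioc r₁ (1-r₂)) = 0 := by
  have hS₁ : Measurable (fun x : ℝ => r₁ * x) := measurable_const_mul r₁
  have hS₂ : Measurable (fun x : ℝ => r₂ * x + 1 - r₂) :=
    ((measurable_const_mul r₂).add_const 1).sub_const r₂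
  have h := congrArg (fun ν : Measure ℝ => ν (Ioc r₁ (1-r₂))) hss
  simp only [Measure.coe_add, Pi.add_apply, Measure.coe_smul, Pi.smul_apply, smul_eq_mul] at h
  rw [Measure.map_apply hS₁ measurableSet_Ioc, Measure.map_apply hS₂ measurableSet_Ioc] at h
  have h1 : μ ((fun x : ℝ => r₁*x) ⁻¹' Ioc r₁ (1-r₂)) = 0 := by
    refine measure_mono_null (fun t ht => ?_) (null_Ioi hsupp)
    simp only [mem_preimage, mem_Ioc] at ht
    simp only [mem_Ioi]
    nlinarith [ht.1]
  have h2 : μ ((fun x : ℝ => r₂*x+1-r₂) ⁻¹' Ioc r₁ (1-r₂)) = 0 := by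
    refine measure_mono_null (fun t ht => ?_) (null_Iic hsupp)
    simp only [mem_preimage, mem_Ioc] at ht
    simp only [mem_Iic]
    nlinarith [ht.2]
  rw [h1, h2] at h
  simpa using h

lemma muint_const_gap
    (hsupp : μ (Set.Icc (0:ℝ) 1)ᶜ = 0)
    (hr₁ : 0 < r₁) (hr₂ : 0 < r₂)
    (hss : μ = ENNReal.ofReal m₁ • Measure.map (fun x => r₁ * x) μ
           + ENNReal.ofReal m₂ • Measure.map (fun x => r₂ * x + 1 - r₂) μ)
    (f : ℝ → ℝ) {b : ℝ} (hb1 : r₁ ≤ b) (hb2 : b ≤ 1 - r₂) :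
    ∫ t in Icc (0:ℝ) b, f t ∂μ = ∫ t in Icc (0:ℝ) r₁, f t ∂μ := by
  refine setIntegral_congr_set ?_
  rw [ae_eq_set]
  constructor
  · refine measure_mono_null (fun t ht => ?_) (null_gap hsupp hr₁ hr₂ hss)
    simp only [mem_diff, mem_Icc, not_and_or, not_le, mem_Ioc] at ht ⊢
    rcases ht with ⟨⟨h0, h1⟩, h2⟩
    rcases h2 with h | h
    · linarith
    · exact ⟨h, by linarith⟩
  · have : Icc (0:ℝ) r₁ \ Icc (0:ℝ) b = ∅ := by
      rw [eq_empty_iff_forall_notMem]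
      intro t ht
      simp only [mem_diff, mem_Icc, not_and_or, not_le] at ht
      rcases ht with ⟨⟨h0, h1⟩, h2⟩
      rcases h2 with h | h
      · linarith
      · linarith
    rw [this]; exact measure_empty

lemma mono_nn_mu (f : ℝ → ℝ) (hf : Monotone f) (hnn : ∀ x, 0 ≤ x → 0 ≤ f x)
    (g : ℝ → ℝ) (hg : ∀ x, g x = ∫ t in Icc (0:ℝ) x, f t ∂μ) :
    Monotone g ∧ ∀ x, 0 ≤ g x := by
  constructor
  · intro a b hab
    rw [hg a, hg b]
    refine setIntegral_mono_set (integrableOn_Icc f hf b) ?_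
      (HasSubset.Subset.eventuallyLE (Icc_subset_Icc le_rfl hab))
    exact (ae_restrict_iff' measurableSet_Icc).2 (.of_forall fun t ht => hnn t ht.1)
  · intro x
    rw [hg x]
    exact setIntegral_nonneg measurableSet_Icc fun t ht => hnn t ht.1

lemma mono_nn_leb (f : ℝ → ℝ) (hf : Monotone f) (hnn : ∀ x, 0 ≤ f x)
    (g : ℝ → ℝ) (hg : ∀ x, g x = ∫ t in (0:ℝ)..x, f t) :
    Monotone g ∧ ∀ x, 0 ≤ x → 0 ≤ g x := by
  constructor
  · intro a b hab
    rw [hg a, hg b]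
    have hadd := intervalIntegral.integral_add_adjacent_intervals
      (hf.intervalIntegrable : IntervalIntegrable f volume 0 a)
      (hf.intervalIntegrable : IntervalIntegrable f volume a b)
    have hnn2 : 0 ≤ ∫ t in a..b, f t :=
      intervalIntegral.integral_nonneg hab fun u _ => hnn u
    linarith
  · intro x hx
    rw [hg x]
    exact intervalIntegral.integral_nonneg hx fun u _ => hnn u


section Families
variable {p q : ℕ → ℝ → ℝ}

lemma p_nice (hp0 : ∀ x : ℝ, p 0 x = 1)
    (hpodd : ∀ (n : ℕ) (x : ℝ), p (2*n+1) x = ∫ t in Set.Icc (0:ℝ) x, p (2*n) t ∂μ)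
    (hpeven : ∀ (n : ℕ) (x : ℝ), p (2*n+2) x = ∫ t in (0:ℝ)..x, p (2*n+1) t) :
    ∀ n : ℕ, (Monotone (p (2*n)) ∧ ∀ x, 0 ≤ x → 0 ≤ p (2*n) x)
      ∧ (Monotone (p (2*n+1)) ∧ ∀ x, 0 ≤ p (2*n+1) x) := by
  intro n
  induction n with
  | zero =>
    have h0m : Monotone (p 0) := fun a b _ => by rw [hp0, hp0]
    have h0n : ∀ x, 0 ≤ x → 0 ≤ p 0 x := fun x _ => by rw [hp0]; norm_num
    have h1 := mono_nn_mu (μ := μ) (p 0) h0m h0n (p 1) (fun x => by simpa using hpodd 0 x)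
    exact ⟨⟨h0m, h0n⟩, h1.1, h1.2⟩
  | succ n ih =>
    obtain ⟨⟨hem, henn⟩, hom, honn⟩ := ih
    have he2 : Monotone (p (2*(n+1))) ∧ ∀ x, 0 ≤ x → 0 ≤ p (2*(n+1)) x := by
      have h := mono_nn_leb (p (2*n+1)) hom honn (p (2*n+2)) (hpeven n)
      rw [show 2*(n+1) = 2*n+2 by ring]
      exact h
    exact ⟨he2, mono_nn_mu (μ := μ) (p (2*(n+1))) he2.1 he2.2 (p (2*(n+1)+1)) (hpodd (n+1))⟩

lemma q_nice (hq0 : ∀ x : ℝ, q 0 x = 1)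
    (hqodd : ∀ (n : ℕ) (x : ℝ), q (2*n+1) x = ∫ t in (0:ℝ)..x, q (2*n) t)
    (hqeven : ∀ (n : ℕ) (x : ℝ), q (2*n+2) x = ∫ t in Set.Icc (0:ℝ) x, q (2*n+1) t ∂μ) :
    ∀ n : ℕ, (Monotone (q (2*n)) ∧ ∀ x, 0 ≤ q (2*n) x)
      ∧ (Monotone (q (2*n+1)) ∧ ∀ x, 0 ≤ x → 0 ≤ q (2*n+1) x) := by
  intro n
  induction n with
  | zero =>
    have h0m : Monotone (q 0) := fun a b _ => by rw [hq0, hq0]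
    have h0n : ∀ x, 0 ≤ q 0 x := fun x => by rw [hq0]; norm_num
    have h1 := mono_nn_leb (q 0) h0m h0n (q 1) (fun x => by simpa using hqodd 0 x)
    exact ⟨⟨h0m, h0n⟩, h1.1, h1.2⟩
  | succ n ih =>
    obtain ⟨⟨hem, henn⟩, hom, honn⟩ := ih
    have he2 : Monotone (q (2*(n+1))) ∧ ∀ x, 0 ≤ q (2*(n+1)) x := by
      have h := mono_nn_mu (μ := μ) (q (2*n+1)) hom honn (q (2*n+2)) (hqeven n)
      rw [show 2*(n+1) = 2*n+2 by ring]
      exact h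
    refine ⟨he2, ?_⟩
    have h := mono_nn_leb (q (2*(n+1))) he2.1 he2.2 (q (2*(n+1)+1)) (hqodd (n+1))
    exact h

lemma scale_step_mu
    (hsupp : μ (Set.Icc (0:ℝ) 1)ᶜ = 0)
    (hr₁ : 0 < r₁) (hr₂ : 0 < r₂) (hm₁ : 0 < m₁) (hm₂ : 0 < m₂) (hrsum : r₁ + r₂ ≤ 1)
    (hss : μ = ENNReal.ofReal m₁ • Measure.map (fun x => r₁ * x) μ
           + ENNReal.ofReal m₂ • Measure.map (fun x => r₂ * x + 1 - r₂) μ)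
    (f g : ℝ → ℝ) (hf : Monotone f) (c : ℝ)
    (hg : ∀ x, g x = ∫ t in Icc (0:ℝ) x, f t ∂μ)
    (hsc : ∀ x ∈ Icc (0:ℝ) 1, f (r₁*x) = c * f x) :
    ∀ x ∈ Icc (0:ℝ) 1, g (r₁*x) = (m₁*c) * g x := by
  intro x hx
  rw [hg, hg, muint_L1 hsupp hr₁ hr₂ hm₁ hm₂ hrsum hss f hf hx]
  have h : ∫ t in Icc (0:ℝ) x, f (r₁*t) ∂μ = ∫ t in Icc (0:ℝ) x, c * f t ∂μ := by
    refine setIntegral_congr_fun measurableSet_Icc fun t ht => ?_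
    exact hsc t ⟨ht.1, le_trans ht.2 hx.2⟩
  rw [h, integral_const_mul]
  ring

lemma scale_step_leb (hr₁ : 0 < r₁)
    (f g : ℝ → ℝ) (hf : Monotone f) (c : ℝ)
    (hg : ∀ x, g x = ∫ t in (0:ℝ)..x, f t)
    (hsc : ∀ x ∈ Icc (0:ℝ) 1, f (r₁*x) = c * f x) :
    ∀ x ∈ Icc (0:ℝ) 1, g (r₁*x) = (r₁*c) * g x := by
  intro x hx
  rw [hg, hg]
  have h1 : ∫ t in (0:ℝ)..x, f (r₁*t) = r₁⁻¹ • ∫ t in (r₁*0)..(r₁*x), f t :=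
    intervalIntegral.integral_comp_mul_left f hr₁.ne'
  rw [mul_zero] at h1
  have h2 : ∫ t in (0:ℝ)..(r₁*x), f t = r₁ * ∫ t in (0:ℝ)..x, f (r₁*t) := by
    rw [h1, smul_eq_mul, ← mul_assoc, mul_inv_cancel₀ hr₁.ne', one_mul]
  rw [h2]
  have h3 : ∫ t in (0:ℝ)..x, f (r₁*t) = ∫ t in (0:ℝ)..x, c * f t := by
    refine intervalIntegral.integral_congr fun t ht => ?_
    rw [uIcc_of_le hx.1] at ht
    exact hsc t ⟨ht.1, le_trans ht.2 hx.2⟩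
  rw [h3, intervalIntegral.integral_const_mul]
  ring

lemma p_scale
    (hsupp : μ (Set.Icc (0:ℝ) 1)ᶜ = 0)
    (hr₁ : 0 < r₁) (hr₂ : 0 < r₂) (hm₁ : 0 < m₁) (hm₂ : 0 < m₂) (hrsum : r₁ + r₂ ≤ 1)
    (hss : μ = ENNReal.ofReal m₁ • Measure.map (fun x => r₁ * x) μ
           + ENNReal.ofReal m₂ • Measure.map (fun x => r₂ * x + 1 - r₂) μ)
    (hp0 : ∀ x : ℝ, p 0 x = 1)
    (hpodd : ∀ (n : ℕ) (x : ℝ), p (2*n+1) x = ∫ t in Set.Icc (0:ℝ) x, p (2*n) t ∂μ)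
    (hpeven : ∀ (n : ℕ) (x : ℝ), p (2*n+2) x = ∫ t in (0:ℝ)..x, p (2*n+1) t) :
    ∀ n : ℕ, (∀ x ∈ Icc (0:ℝ) 1, p (2*n) (r₁*x) = (r₁*m₁)^n * p (2*n) x)
      ∧ (∀ x ∈ Icc (0:ℝ) 1, p (2*n+1) (r₁*x) = (r₁^n*m₁^(n+1)) * p (2*n+1) x) := by
  have hnice := p_nice (μ := μ) hp0 hpodd hpeven
  intro n
  induction n with
  | zero =>
    constructor
    · intro x hx; simp [hp0]
    · have h := scale_step_mu hsupp hr₁ hr₂ hm₁ hm₂ hrsum hss (p 0) (p 1)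
        ((hnice 0).1.1) 1 (fun x => by simpa using hpodd 0 x)
        (fun x hx => by rw [hp0, hp0, one_mul])
      intro x hx
      have := h x hx
      simpa using this
  | succ n ih =>
    have he : ∀ x ∈ Icc (0:ℝ) 1, p (2*(n+1)) (r₁*x) = (r₁*m₁)^(n+1) * p (2*(n+1)) x := by
      have h := scale_step_leb hr₁ (p (2*n+1)) (p (2*n+2)) ((hnice n).2.1)
        (r₁^n*m₁^(n+1)) (hpeven n) ih.2
      rw [show 2*(n+1) = 2*n+2 by ring]
      intro x hx
      rw [h x hx]
      ring
    refine ⟨he, ?_⟩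
    have h := scale_step_mu hsupp hr₁ hr₂ hm₁ hm₂ hrsum hss (p (2*(n+1))) (p (2*(n+1)+1))
      ((hnice (n+1)).1.1) ((r₁*m₁)^(n+1)) (hpodd (n+1)) he
    intro x hx
    rw [h x hx]
    ring

lemma q_scale
    (hsupp : μ (Set.Icc (0:ℝ) 1)ᶜ = 0)
    (hr₁ : 0 < r₁) (hr₂ : 0 < r₂) (hm₁ : 0 < m₁) (hm₂ : 0 < m₂) (hrsum : r₁ + r₂ ≤ 1)
    (hss : μ = ENNReal.ofReal m₁ • Measure.map (fun x => r₁ * x) μ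
           + ENNReal.ofReal m₂ • Measure.map (fun x => r₂ * x + 1 - r₂) μ)
    (hq0 : ∀ x : ℝ, q 0 x = 1)
    (hqodd : ∀ (n : ℕ) (x : ℝ), q (2*n+1) x = ∫ t in (0:ℝ)..x, q (2*n) t)
    (hqeven : ∀ (n : ℕ) (x : ℝ), q (2*n+2) x = ∫ t in Set.Icc (0:ℝ) x, q (2*n+1) t ∂μ) :
    ∀ n : ℕ, (∀ x ∈ Icc (0:ℝ) 1, q (2*n) (r₁*x) = (r₁*m₁)^n * q (2*n) x)
      ∧ (∀ x ∈ Icc (0:ℝ) 1, q (2*n+1) (r₁*x) = (r₁^(n+1)*m₁^n) * q (2*n+1) x) := by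
  have hnice := q_nice (μ := μ) hq0 hqodd hqeven
  intro n
  induction n with
  | zero =>
    constructor
    · intro x hx; simp [hq0]
    · have h := scale_step_leb hr₁ (q 0) (q 1) ((hnice 0).1.1) 1
        (fun x => by simpa using hqodd 0 x) (fun x hx => by rw [hq0, hq0, one_mul])
      intro x hx
      have := h x hx
      simpa using this
  | succ n ih =>
    have ho : ∀ x ∈ Icc (0:ℝ) 1, q (2*n+2) (r₁*x) = (r₁*m₁)^(n+1) * q (2*n+2) x := by
      have h := scale_step_mu hsupp hr₁ hr₂ hm₁ hm₂ hrsum hss (q (2*n+1)) (q (2*n+2))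
        ((hnice n).2.1) (r₁^(n+1)*m₁^n) (hqeven n) ih.2
      intro x hx
      rw [h x hx]
      ring
    constructor
    · rw [show 2*(n+1) = 2*n+2 by ring]
      exact ho
    · have h := scale_step_leb hr₁ (q (2*(n+1))) (q (2*(n+1)+1)) ((hnice (n+1)).1.1)
        ((r₁*m₁)^(n+1)) (hqodd (n+1))
        (by rw [show 2*(n+1) = 2*n+2 by ring]; exact ho)
      intro x hx
      rw [h x hx]
      ring


lemma iint_sum3 {k l m : ℕ} (F G H : ℕ → ℝ → ℝ) (a b c : ℕ → ℝ) (C x : ℝ)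
    (hF : ∀ i ∈ Finset.range k, IntervalIntegrable (F i) volume 0 x)
    (hG : ∀ i ∈ Finset.range l, IntervalIntegrable (G i) volume 0 x)
    (hH : ∀ i ∈ Finset.range m, IntervalIntegrable (H i) volume 0 x) :
    ∫ u in (0:ℝ)..x, ((∑ i ∈ Finset.range k, a i * F i u)
        + (∑ i ∈ Finset.range l, b i * G i u)
        + C * ∑ i ∈ Finset.range m, c i * H i u)
      = (∑ i ∈ Finset.range k, a i * ∫ u in (0:ℝ)..x, F i u)
        + (∑ i ∈ Finset.range l, b i * ∫ u in (0:ℝ)..x, G i u)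
        + C * ∑ i ∈ Finset.range m, c i * ∫ u in (0:ℝ)..x, H i u := by
  have hF' : ∀ i ∈ Finset.range k, IntervalIntegrable (fun u => a i * F i u) volume 0 x :=
    fun i hi => (hF i hi).const_mul _
  have hG' : ∀ i ∈ Finset.range l, IntervalIntegrable (fun u => b i * G i u) volume 0 x :=
    fun i hi => (hG i hi).const_mul _
  have hH' : ∀ i ∈ Finset.range m, IntervalIntegrable (fun u => c i * H i u) volume 0 x :=
    fun i hi => (hH i hi).const_mul _
  have hS1 : IntervalIntegrable (fun u => ∑ i ∈ Finset.range k, a i * F i u) volume 0 x := by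
    have h := IntervalIntegrable.sum (Finset.range k) hF'
    rwa [show (∑ i ∈ Finset.range k, fun u => a i * F i u)
      = (fun u => ∑ i ∈ Finset.range k, a i * F i u) from funext fun u => by
        simp [Finset.sum_apply]] at h
  have hS2 : IntervalIntegrable (fun u => ∑ i ∈ Finset.range l, b i * G i u) volume 0 x := by
    have h := IntervalIntegrable.sum (Finset.range l) hG'
    rwa [show (∑ i ∈ Finset.range l, fun u => b i * G i u)
      = (fun u => ∑ i ∈ Finset.range l, b i * G i u) from funext fun u => by
        simp [Finset.sum_apply]] at h
  have hS3 : IntervalIntegrable (fun u => ∑ i ∈ Finset.range m, c i * H i u) volume 0 x := by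
    have h := IntervalIntegrable.sum (Finset.range m) hH'
    rwa [show (∑ i ∈ Finset.range m, fun u => c i * H i u)
      = (fun u => ∑ i ∈ Finset.range m, c i * H i u) from funext fun u => by
        simp [Finset.sum_apply]] at h
  have hS12 : IntervalIntegrable
      (fun u => (∑ i ∈ Finset.range k, a i * F i u) + ∑ i ∈ Finset.range l, b i * G i u)
      volume 0 x := hS1.add hS2
  have hS3' : IntervalIntegrable (fun u => C * ∑ i ∈ Finset.range m, c i * H i u) volume 0 x :=
    hS3.const_mul C
  rw [intervalIntegral.integral_add hS12 hS3', intervalIntegral.integral_add hS1 hS2,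
      intervalIntegral.integral_const_mul,
      intervalIntegral.integral_finset_sum hF',
      intervalIntegral.integral_finset_sum hG',
      intervalIntegral.integral_finset_sum hH']
  simp only [intervalIntegral.integral_const_mul]

lemma muint_sum3 {k l m : ℕ} (F G H : ℕ → ℝ → ℝ) (a b c : ℕ → ℝ) (C x : ℝ)
    (hF : ∀ i ∈ Finset.range k, IntegrableOn (F i) (Icc (0:ℝ) x) μ)
    (hG : ∀ i ∈ Finset.range l, IntegrableOn (G i) (Icc (0:ℝ) x) μ)
    (hH : ∀ i ∈ Finset.range m, IntegrableOn (H i) (Icc (0:ℝ) x) μ) :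
    ∫ t in Icc (0:ℝ) x, ((∑ i ∈ Finset.range k, a i * F i t)
        + (∑ i ∈ Finset.range l, b i * G i t)
        + C * ∑ i ∈ Finset.range m, c i * H i t) ∂μ
      = (∑ i ∈ Finset.range k, a i * ∫ t in Icc (0:ℝ) x, F i t ∂μ)
        + (∑ i ∈ Finset.range l, b i * ∫ t in Icc (0:ℝ) x, G i t ∂μ)
        + C * ∑ i ∈ Finset.range m, c i * ∫ t in Icc (0:ℝ) x, H i t ∂μ := by
  have hF' : ∀ i ∈ Finset.range k, Integrable (fun u => a i * F i u) (μ.restrict (Icc 0 x)) :=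
    fun i hi => (hF i hi).const_mul _
  have hG' : ∀ i ∈ Finset.range l, Integrable (fun u => b i * G i u) (μ.restrict (Icc 0 x)) :=
    fun i hi => (hG i hi).const_mul _
  have hH' : ∀ i ∈ Finset.range m, Integrable (fun u => c i * H i u) (μ.restrict (Icc 0 x)) :=
    fun i hi => (hH i hi).const_mul _
  have hS1 : Integrable (fun u => ∑ i ∈ Finset.range k, a i * F i u) (μ.restrict (Icc 0 x)) :=
    integrable_finset_sum _ hF'
  have hS2 : Integrable (fun u => ∑ i ∈ Finset.range l, b i * G i u) (μ.restrict (Icc 0 x)) :=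
    integrable_finset_sum _ hG'
  have hS3 : Integrable (fun u => ∑ i ∈ Finset.range m, c i * H i u) (μ.restrict (Icc 0 x)) :=
    integrable_finset_sum _ hH'
  have hS12 : Integrable
      (fun u => (∑ i ∈ Finset.range k, a i * F i u) + ∑ i ∈ Finset.range l, b i * G i u)
      (μ.restrict (Icc 0 x)) := hS1.add hS2
  have hS3' : Integrable (fun u => C * ∑ i ∈ Finset.range m, c i * H i u)
      (μ.restrict (Icc 0 x)) := hS3.const_mul C
  rw [integral_add hS12 hS3', integral_add hS1 hS2,
      integral_const_mul, integral_finset_sum _ hF', integral_finset_sum _ hG',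
      integral_finset_sum _ hH']
  simp only [integral_const_mul]


lemma stepBA
    (hsupp : μ (Set.Icc (0:ℝ) 1)ᶜ = 0)
    (hr₁ : 0 < r₁) (hr₂ : 0 < r₂) (hm₁ : 0 < m₁) (hm₂ : 0 < m₂) (hrsum : r₁ + r₂ ≤ 1)
    (hss : μ = ENNReal.ofReal m₁ • Measure.map (fun x => r₁ * x) μ
           + ENNReal.ofReal m₂ • Measure.map (fun x => r₂ * x + 1 - r₂) μ)
    (hp0 : ∀ x : ℝ, p 0 x = 1)
    (hpodd : ∀ (n : ℕ) (x : ℝ), p (2*n+1) x = ∫ t in Set.Icc (0:ℝ) x, p (2*n) t ∂μ)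
    (hpeven : ∀ (n : ℕ) (x : ℝ), p (2*n+2) x = ∫ t in (0:ℝ)..x, p (2*n+1) t)
    (hqodd : ∀ (n : ℕ) (x : ℝ), q (2*n+1) x = ∫ t in (0:ℝ)..x, q (2*n) t)
    (pmono : ∀ k, Monotone (p k)) (qmono : ∀ k, Monotone (q k))
    (pse : ∀ k, ∀ x ∈ Icc (0:ℝ) 1, p (2*k) (r₁*x) = (r₁*m₁)^k * p (2*k) x)
    (pso : ∀ k, ∀ x ∈ Icc (0:ℝ) 1, p (2*k+1) (r₁*x) = (r₁^k*m₁^(k+1)) * p (2*k+1) x)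
    (n : ℕ)
    (hA : ∀ x ∈ Icc (0:ℝ) 1, p (2*n+1) (r₂*x+1-r₂)
      = (∑ i ∈ Finset.range (n+1), r₁^i * m₁^(i+1) * (r₂*m₂)^(n-i) * p (2*i+1) 1 * q (2*n-2*i) x)
        + (∑ i ∈ Finset.range (n+1), (r₁*m₁)^i * r₂^(n-i) * m₂^(n-i+1) * p (2*i) 1 * p (2*n-2*i+1) x)
        + (1-(r₁+r₂)) * ∑ i ∈ Finset.range n,
            r₁^i * m₁^(i+1) * r₂^(n-i-1) * m₂^(n-i) * p (2*i+1) 1 * p (2*n-2*i-1) x) :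
    ∀ x ∈ Icc (0:ℝ) 1, p (2*(n+1)) (r₂*x+1-r₂)
      = (∑ i ∈ Finset.range ((n+1)+1), (r₁*m₁)^i * (r₂*m₂)^((n+1)-i) * p (2*i) 1 * p (2*(n+1)-2*i) x)
        + (∑ i ∈ Finset.range (n+1), r₁^i * m₁^(i+1) * r₂^((n+1)-i) * m₂^((n+1)-i-1) * p (2*i+1) 1 * q (2*(n+1)-2*i-1) x)
        + (1-(r₁+r₂)) * ∑ i ∈ Finset.range (n+1),
            r₁^i * m₁^(i+1) * (r₂*m₂)^((n+1)-i-1) * p (2*i+1) 1 * p (2*(n+1)-2*i-2) x := by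
  intro x hx
  have hxl := hx.1
  have hxu := hx.2
  have h1r2 : r₁ ≤ 1 - r₂ := by linarith
  have hL : p (2*(n+1)) (r₂*x+1-r₂) = ∫ t in (0:ℝ)..(r₂*x+1-r₂), p (2*n+1) t := by
    rw [show 2*(n+1) = 2*n+2 by ring]
    exact hpeven n _
  have i1 : IntervalIntegrable (p (2*n+1)) volume 0 r₁ := (pmono _).intervalIntegrable
  have i2 : IntervalIntegrable (p (2*n+1)) volume r₁ (1-r₂) := (pmono _).intervalIntegrable
  have i3 : IntervalIntegrable (p (2*n+1)) volume (1-r₂) (r₂*x+1-r₂) :=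
    (pmono _).intervalIntegrable
  have e1 := intervalIntegral.integral_add_adjacent_intervals i1 i2
  have e2 := intervalIntegral.integral_add_adjacent_intervals (i1.trans i2) i3
  have hT1 : ∫ t in (0:ℝ)..r₁, p (2*n+1) t = (r₁*m₁)^(n+1) * p (2*n+2) 1 := by
    rw [← hpeven n r₁]
    have h2 := pse (n+1) 1 ⟨zero_le_one, le_refl 1⟩
    rw [mul_one, show 2*(n+1) = 2*n+2 by ring] at h2
    exact h2
  have hT2 : ∫ t in r₁..(1-r₂), p (2*n+1) t
      = (1-(r₁+r₂)) * (r₁^n*m₁^(n+1) * p (2*n+1) 1) := by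
    have hc : ∀ t ∈ uIcc r₁ (1-r₂), p (2*n+1) t = p (2*n+1) r₁ := by
      intro t ht
      rw [uIcc_of_le h1r2] at ht
      rw [hpodd n t, hpodd n r₁]
      exact muint_const_gap hsupp hr₁ hr₂ hss (p (2*n)) ht.1 ht.2
    rw [intervalIntegral.integral_congr hc, intervalIntegral.integral_const]
    have hval := pso n 1 ⟨zero_le_one, le_refl 1⟩
    rw [mul_one] at hval
    rw [hval, smul_eq_mul]
    ring
  have hT3 : ∫ t in (1-r₂)..(r₂*x+1-r₂), p (2*n+1) t
      = r₂ * ∫ u in (0:ℝ)..x, p (2*n+1) (r₂*u+1-r₂) := by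
    have h := intervalIntegral.integral_comp_mul_add (f := p (2*n+1)) (a := (0:ℝ)) (b := x)
      hr₂.ne' (1-r₂)
    have e3 : ∀ u : ℝ, r₂ * u + (1 - r₂) = r₂*u+1-r₂ := fun u => by ring
    simp only [e3, mul_zero, zero_add] at h
    rw [h, smul_eq_mul, ← mul_assoc, mul_inv_cancel₀ hr₂.ne', one_mul]
  have hAint : ∫ u in (0:ℝ)..x, p (2*n+1) (r₂*u+1-r₂)
      = (∑ i ∈ Finset.range (n+1), r₁^i * m₁^(i+1) * (r₂*m₂)^(n-i) * p (2*i+1) 1 * q (2*n-2*i+1) x)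
        + (∑ i ∈ Finset.range (n+1), (r₁*m₁)^i * r₂^(n-i) * m₂^(n-i+1) * p (2*i) 1 * p (2*n-2*i+2) x)
        + (1-(r₁+r₂)) * ∑ i ∈ Finset.range n,
            r₁^i * m₁^(i+1) * r₂^(n-i-1) * m₂^(n-i) * p (2*i+1) 1 * p (2*n-2*i) x := by
    have hcg : ∀ u ∈ uIcc (0:ℝ) x, p (2*n+1) (r₂*u+1-r₂)
        = (∑ i ∈ Finset.range (n+1), r₁^i * m₁^(i+1) * (r₂*m₂)^(n-i) * p (2*i+1) 1 * q (2*n-2*i) u)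
          + (∑ i ∈ Finset.range (n+1), (r₁*m₁)^i * r₂^(n-i) * m₂^(n-i+1) * p (2*i) 1 * p (2*n-2*i+1) u)
          + (1-(r₁+r₂)) * ∑ i ∈ Finset.range n,
              r₁^i * m₁^(i+1) * r₂^(n-i-1) * m₂^(n-i) * p (2*i+1) 1 * p (2*n-2*i-1) u := by
      intro u hu
      rw [uIcc_of_le hxl] at hu
      exact hA u ⟨hu.1, le_trans hu.2 hxu⟩
    rw [intervalIntegral.integral_congr hcg]
    rw [iint_sum3 (fun i => q (2*n-2*i)) (fun i => p (2*n-2*i+1)) (fun i => p (2*n-2*i-1))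
        (fun i => r₁^i * m₁^(i+1) * (r₂*m₂)^(n-i) * p (2*i+1) 1)
        (fun i => (r₁*m₁)^i * r₂^(n-i) * m₂^(n-i+1) * p (2*i) 1)
        (fun i => r₁^i * m₁^(i+1) * r₂^(n-i-1) * m₂^(n-i) * p (2*i+1) 1)
        (1-(r₁+r₂)) x (fun i _ => (qmono _).intervalIntegrable)
        (fun i _ => (pmono _).intervalIntegrable) (fun i _ => (pmono _).intervalIntegrable)]
    congr 1
    · congr 1
      · refine Finset.sum_congr rfl fun i hi => ?_
        have hi' : i ≤ n := by simpa [Nat.lt_succ_iff] using hi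
        congr 1
        have h := (hqodd (n-i) x).symm
        rw [show 2*(n-i) = 2*n-2*i by omega] at h
        exact h
      · refine Finset.sum_congr rfl fun i hi => ?_
        have hi' : i ≤ n := by simpa [Nat.lt_succ_iff] using hi
        congr 1
        have h := (hpeven (n-i) x).symm
        rw [show 2*(n-i) = 2*n-2*i by omega] at h
        exact h
    · congr 1
      refine Finset.sum_congr rfl fun i hi => ?_
      have hi' : i < n := Finset.mem_range.mp hi
      congr 1
      have h := (hpeven (n-i-1) x).symm
      rw [show 2*(n-i-1)+1 = 2*n-2*i-1 by omega, show 2*(n-i-1)+2 = 2*n-2*i by omega] at h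
      exact h
  have hR1 : ∑ i ∈ Finset.range ((n+1)+1), (r₁*m₁)^i * (r₂*m₂)^((n+1)-i) * p (2*i) 1 * p (2*(n+1)-2*i) x
      = r₂ * (∑ i ∈ Finset.range (n+1), (r₁*m₁)^i * r₂^(n-i) * m₂^(n-i+1) * p (2*i) 1 * p (2*n-2*i+2) x)
        + (r₁*m₁)^(n+1) * p (2*n+2) 1 := by
    rw [Finset.sum_range_succ, Finset.mul_sum]
    congr 1
    · refine Finset.sum_congr rfl fun i hi => ?_
      have hi' : i ≤ n := by simpa [Nat.lt_succ_iff] using hi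
      obtain ⟨k, rfl⟩ : ∃ k, n = i + k := ⟨n - i, by omega⟩
      rw [show (i+k)+1-i = k+1 by omega, show 2*((i+k)+1)-2*i = 2*k+2 by omega,
          show (i+k)-i = k by omega, show 2*(i+k)-2*i = 2*k by omega]
      ring
    · rw [Nat.sub_self, pow_zero, show 2*((n+1))-2*(n+1) = 0 by omega, hp0,
          show 2*(n+1) = 2*n+2 by ring]
      ring
  have hR2 : ∑ i ∈ Finset.range (n+1), r₁^i * m₁^(i+1) * r₂^((n+1)-i) * m₂^((n+1)-i-1) * p (2*i+1) 1 * q (2*(n+1)-2*i-1) x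
      = r₂ * ∑ i ∈ Finset.range (n+1), r₁^i * m₁^(i+1) * (r₂*m₂)^(n-i) * p (2*i+1) 1 * q (2*n-2*i+1) x := by
    rw [Finset.mul_sum]
    refine Finset.sum_congr rfl fun i hi => ?_
    have hi' : i ≤ n := by simpa [Nat.lt_succ_iff] using hi
    obtain ⟨k, rfl⟩ : ∃ k, n = i + k := ⟨n - i, by omega⟩
    rw [show (i+k)+1-i-1 = k by omega, show (i+k)+1-i = k+1 by omega,
        show 2*((i+k)+1)-2*i-1 = 2*k+1 by omega, show (i+k)-i = k by omega,
        show 2*(i+k)-2*i = 2*k by omega]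
    ring
  have hR3 : ∑ i ∈ Finset.range (n+1), r₁^i * m₁^(i+1) * (r₂*m₂)^((n+1)-i-1) * p (2*i+1) 1 * p (2*(n+1)-2*i-2) x
      = r₂ * (∑ i ∈ Finset.range n, r₁^i * m₁^(i+1) * r₂^(n-i-1) * m₂^(n-i) * p (2*i+1) 1 * p (2*n-2*i) x)
        + r₁^n * m₁^(n+1) * p (2*n+1) 1 := by
    rw [Finset.sum_range_succ, Finset.mul_sum]
    congr 1
    · refine Finset.sum_congr rfl fun i hi => ?_
      have hi' : i < n := Finset.mem_range.mp hi
      obtain ⟨k, rfl⟩ : ∃ k, n = i + (k + 1) := ⟨n - i - 1, by omega⟩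
      rw [show (i+(k+1))+1-i-1 = k+1 by omega, show 2*((i+(k+1))+1)-2*i-2 = 2*k+2 by omega,
          show (i+(k+1))-i-1 = k by omega, show (i+(k+1))-i = k+1 by omega,
          show 2*(i+(k+1))-2*i = 2*k+2 by omega]
      ring
    · rw [show (n+1)-n-1 = 0 by omega, pow_zero, show 2*(n+1)-2*n-2 = 0 by omega, hp0]
      ring
  rw [hL, ← e2, ← e1, hT1, hT2, hT3, hAint, hR1, hR2, hR3]
  ring


lemma stepAB
    (hsupp : μ (Set.Icc (0:ℝ) 1)ᶜ = 0)
    (hr₁ : 0 < r₁) (hr₂ : 0 < r₂) (hm₁ : 0 < m₁) (hm₂ : 0 < m₂) (hrsum : r₁ + r₂ ≤ 1)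
    (hss : μ = ENNReal.ofReal m₁ • Measure.map (fun x => r₁ * x) μ
           + ENNReal.ofReal m₂ • Measure.map (fun x => r₂ * x + 1 - r₂) μ)
    (hq0 : ∀ x : ℝ, q 0 x = 1)
    (hpodd : ∀ (n : ℕ) (x : ℝ), p (2*n+1) x = ∫ t in Set.Icc (0:ℝ) x, p (2*n) t ∂μ)
    (hqeven : ∀ (n : ℕ) (x : ℝ), q (2*n+2) x = ∫ t in Set.Icc (0:ℝ) x, q (2*n+1) t ∂μ)
    (pmono : ∀ k, Monotone (p k)) (qmono : ∀ k, Monotone (q k))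
    (pse : ∀ k, ∀ x ∈ Icc (0:ℝ) 1, p (2*k) (r₁*x) = (r₁*m₁)^k * p (2*k) x)
    (n : ℕ)
    (hB : ∀ x ∈ Icc (0:ℝ) 1, p (2*n) (r₂*x+1-r₂)
      = (∑ i ∈ Finset.range (n+1), (r₁*m₁)^i * (r₂*m₂)^(n-i) * p (2*i) 1 * p (2*n-2*i) x)
        + (∑ i ∈ Finset.range n, r₁^i * m₁^(i+1) * r₂^(n-i) * m₂^(n-i-1) * p (2*i+1) 1 * q (2*n-2*i-1) x)
        + (1-(r₁+r₂)) * ∑ i ∈ Finset.range n,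
            r₁^i * m₁^(i+1) * (r₂*m₂)^(n-i-1) * p (2*i+1) 1 * p (2*n-2*i-2) x) :
    ∀ x ∈ Icc (0:ℝ) 1, p (2*n+1) (r₂*x+1-r₂)
      = (∑ i ∈ Finset.range (n+1), r₁^i * m₁^(i+1) * (r₂*m₂)^(n-i) * p (2*i+1) 1 * q (2*n-2*i) x)
        + (∑ i ∈ Finset.range (n+1), (r₁*m₁)^i * r₂^(n-i) * m₂^(n-i+1) * p (2*i) 1 * p (2*n-2*i+1) x)
        + (1-(r₁+r₂)) * ∑ i ∈ Finset.range n,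
            r₁^i * m₁^(i+1) * r₂^(n-i-1) * m₂^(n-i) * p (2*i+1) 1 * p (2*n-2*i-1) x := by
  intro x hx
  rw [hpodd n _, muint_L2 hsupp hr₁ hr₂ hm₁ hm₂ hrsum hss (p (2*n)) (pmono _) hx]
  have hI1 : ∫ t in Icc (0:ℝ) 1, p (2*n) (r₁*t) ∂μ = (r₁*m₁)^n * p (2*n+1) 1 := by
    have hcg : EqOn (fun t => p (2*n) (r₁*t)) (fun t => (r₁*m₁)^n * p (2*n) t) (Icc (0:ℝ) 1) :=
      fun t ht => pse n t ht
    rw [setIntegral_congr_fun measurableSet_Icc hcg, integral_const_mul, ← hpodd n 1]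
  have hI2 : ∫ t in Icc (0:ℝ) x, p (2*n) (r₂*t+1-r₂) ∂μ
      = (∑ i ∈ Finset.range (n+1), (r₁*m₁)^i * (r₂*m₂)^(n-i) * p (2*i) 1 * p (2*n-2*i+1) x)
        + (∑ i ∈ Finset.range n, r₁^i * m₁^(i+1) * r₂^(n-i) * m₂^(n-i-1) * p (2*i+1) 1 * q (2*n-2*i) x)
        + (1-(r₁+r₂)) * ∑ i ∈ Finset.range n,
            r₁^i * m₁^(i+1) * (r₂*m₂)^(n-i-1) * p (2*i+1) 1 * p (2*n-2*i-1) x := by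
    have hcg : EqOn (fun t => p (2*n) (r₂*t+1-r₂))
        (fun t => (∑ i ∈ Finset.range (n+1), (r₁*m₁)^i * (r₂*m₂)^(n-i) * p (2*i) 1 * p (2*n-2*i) t)
          + (∑ i ∈ Finset.range n, r₁^i * m₁^(i+1) * r₂^(n-i) * m₂^(n-i-1) * p (2*i+1) 1 * q (2*n-2*i-1) t)
          + (1-(r₁+r₂)) * ∑ i ∈ Finset.range n,
              r₁^i * m₁^(i+1) * (r₂*m₂)^(n-i-1) * p (2*i+1) 1 * p (2*n-2*i-2) t) (Icc (0:ℝ) x) :=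
      fun t ht => hB t ⟨ht.1, le_trans ht.2 hx.2⟩
    rw [setIntegral_congr_fun measurableSet_Icc hcg]
    rw [muint_sum3 (μ := μ) (fun i => p (2*n-2*i)) (fun i => q (2*n-2*i-1)) (fun i => p (2*n-2*i-2))
        (fun i => (r₁*m₁)^i * (r₂*m₂)^(n-i) * p (2*i) 1)
        (fun i => r₁^i * m₁^(i+1) * r₂^(n-i) * m₂^(n-i-1) * p (2*i+1) 1)
        (fun i => r₁^i * m₁^(i+1) * (r₂*m₂)^(n-i-1) * p (2*i+1) 1)
        (1-(r₁+r₂)) x (fun i _ => integrableOn_Icc (p (2*n-2*i)) (pmono _) x)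
        (fun i _ => integrableOn_Icc (q (2*n-2*i-1)) (qmono _) x)
        (fun i _ => integrableOn_Icc (p (2*n-2*i-2)) (pmono _) x)]
    congr 1
    · congr 1
      · refine Finset.sum_congr rfl fun i hi => ?_
        have hi' : i ≤ n := by simpa [Nat.lt_succ_iff] using hi
        congr 1
        have h := (hpodd (n-i) x).symm
        rw [show 2*(n-i) = 2*n-2*i by omega] at h
        exact h
      · refine Finset.sum_congr rfl fun i hi => ?_
        have hi' : i < n := Finset.mem_range.mp hi
        congr 1
        have h := (hqeven (n-i-1) x).symm
        rw [show 2*(n-i-1)+1 = 2*n-2*i-1 by omega, show 2*(n-i-1)+2 = 2*n-2*i by omega] at h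
        exact h
    · congr 1
      refine Finset.sum_congr rfl fun i hi => ?_
      have hi' : i < n := Finset.mem_range.mp hi
      congr 1
      have h := (hpodd (n-i-1) x).symm
      rw [show 2*(n-i-1)+1 = 2*n-2*i-1 by omega, show 2*(n-i-1) = 2*n-2*i-2 by omega] at h
      exact h
  have hRA1 : ∑ i ∈ Finset.range (n+1), r₁^i * m₁^(i+1) * (r₂*m₂)^(n-i) * p (2*i+1) 1 * q (2*n-2*i) x
      = m₂ * (∑ i ∈ Finset.range n, r₁^i * m₁^(i+1) * r₂^(n-i) * m₂^(n-i-1) * p (2*i+1) 1 * q (2*n-2*i) x)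
        + r₁^n * m₁^(n+1) * p (2*n+1) 1 := by
    rw [Finset.sum_range_succ, Finset.mul_sum]
    congr 1
    · refine Finset.sum_congr rfl fun i hi => ?_
      have hi' : i < n := Finset.mem_range.mp hi
      obtain ⟨k, rfl⟩ : ∃ k, n = i + (k + 1) := ⟨n - i - 1, by omega⟩
      rw [show (i+(k+1))-i-1 = k by omega, show (i+(k+1))-i = k+1 by omega,
          show 2*(i+(k+1))-2*i = 2*k+2 by omega]
      ring
    · rw [Nat.sub_self, pow_zero, show 2*n-2*n = 0 by omega, hq0]
      ring
  have hRA2 : ∑ i ∈ Finset.range (n+1), (r₁*m₁)^i * r₂^(n-i) * m₂^(n-i+1) * p (2*i) 1 * p (2*n-2*i+1) x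
      = m₂ * ∑ i ∈ Finset.range (n+1), (r₁*m₁)^i * (r₂*m₂)^(n-i) * p (2*i) 1 * p (2*n-2*i+1) x := by
    rw [Finset.mul_sum]
    refine Finset.sum_congr rfl fun i hi => ?_
    have hi' : i ≤ n := by simpa [Nat.lt_succ_iff] using hi
    obtain ⟨k, rfl⟩ : ∃ k, n = i + k := ⟨n - i, by omega⟩
    rw [show (i+k)-i = k by omega]
    ring
  have hRA3 : ∑ i ∈ Finset.range n, r₁^i * m₁^(i+1) * r₂^(n-i-1) * m₂^(n-i) * p (2*i+1) 1 * p (2*n-2*i-1) x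
      = m₂ * ∑ i ∈ Finset.range n, r₁^i * m₁^(i+1) * (r₂*m₂)^(n-i-1) * p (2*i+1) 1 * p (2*n-2*i-1) x := by
    rw [Finset.mul_sum]
    refine Finset.sum_congr rfl fun i hi => ?_
    have hi' : i < n := Finset.mem_range.mp hi
    obtain ⟨k, rfl⟩ : ∃ k, n = i + (k + 1) := ⟨n - i - 1, by omega⟩
    rw [show (i+(k+1))-i-1 = k by omega, show (i+(k+1))-i = k+1 by omega]
    ring
  rw [hI1, hI2, hRA1, hRA2, hRA3]
  ring


lemma stepCD
    (hsupp : μ (Set.Icc (0:ℝ) 1)ᶜ = 0)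
    (hr₁ : 0 < r₁) (hr₂ : 0 < r₂) (hm₁ : 0 < m₁) (hm₂ : 0 < m₂) (hrsum : r₁ + r₂ ≤ 1)
    (hss : μ = ENNReal.ofReal m₁ • Measure.map (fun x => r₁ * x) μ
           + ENNReal.ofReal m₂ • Measure.map (fun x => r₂ * x + 1 - r₂) μ)
    (hp0 : ∀ x : ℝ, p 0 x = 1) (hq0 : ∀ x : ℝ, q 0 x = 1)
    (hpeven : ∀ (n : ℕ) (x : ℝ), p (2*n+2) x = ∫ t in (0:ℝ)..x, p (2*n+1) t)
    (hqodd : ∀ (n : ℕ) (x : ℝ), q (2*n+1) x = ∫ t in (0:ℝ)..x, q (2*n) t)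
    (hqeven : ∀ (n : ℕ) (x : ℝ), q (2*n+2) x = ∫ t in Set.Icc (0:ℝ) x, q (2*n+1) t ∂μ)
    (pmono : ∀ k, Monotone (p k)) (qmono : ∀ k, Monotone (q k))
    (qse : ∀ k, ∀ x ∈ Icc (0:ℝ) 1, q (2*k) (r₁*x) = (r₁*m₁)^k * q (2*k) x)
    (qso : ∀ k, ∀ x ∈ Icc (0:ℝ) 1, q (2*k+1) (r₁*x) = (r₁^(k+1)*m₁^k) * q (2*k+1) x)
    (n : ℕ)
    (hD : ∀ x ∈ Icc (0:ℝ) 1, q (2*n) (r₂*x+1-r₂)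
      = (∑ i ∈ Finset.range (n+1), (r₁*m₁)^i * (r₂*m₂)^(n-i) * q (2*i) 1 * q (2*n-2*i) x)
        + (∑ i ∈ Finset.range n, r₁^(i+1) * m₁^i * r₂^(n-i-1) * m₂^(n-i) * q (2*i+1) 1 * p (2*n-2*i-1) x)
        + (1-(r₁+r₂)) * ∑ i ∈ Finset.range n,
            (r₁*m₁)^i * r₂^(n-i-1) * m₂^(n-i) * q (2*i) 1 * p (2*n-2*i-1) x) :
    ∀ x ∈ Icc (0:ℝ) 1, q (2*n+1) (r₂*x+1-r₂)
      = (∑ i ∈ Finset.range (n+1), r₁^(i+1) * m₁^i * (r₂*m₂)^(n-i) * q (2*i+1) 1 * p (2*n-2*i) x)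
        + (∑ i ∈ Finset.range (n+1), (r₁*m₁)^i * r₂^(n-i+1) * m₂^(n-i) * q (2*i) 1 * q (2*n-2*i+1) x)
        + (1-(r₁+r₂)) * ∑ i ∈ Finset.range (n+1),
            (r₁*m₁)^i * (r₂*m₂)^(n-i) * q (2*i) 1 * p (2*n-2*i) x := by
  intro x hx
  have hxl := hx.1
  have hxu := hx.2
  have h1r2 : r₁ ≤ 1 - r₂ := by linarith
  have hL : q (2*n+1) (r₂*x+1-r₂) = ∫ t in (0:ℝ)..(r₂*x+1-r₂), q (2*n) t := hqodd n _
  have i1 : IntervalIntegrable (q (2*n)) volume 0 r₁ := (qmono _).intervalIntegrable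
  have i2 : IntervalIntegrable (q (2*n)) volume r₁ (1-r₂) := (qmono _).intervalIntegrable
  have i3 : IntervalIntegrable (q (2*n)) volume (1-r₂) (r₂*x+1-r₂) := (qmono _).intervalIntegrable
  have e1 := intervalIntegral.integral_add_adjacent_intervals i1 i2
  have e2 := intervalIntegral.integral_add_adjacent_intervals (i1.trans i2) i3
  have hT1 : ∫ t in (0:ℝ)..r₁, q (2*n) t = r₁^(n+1)*m₁^n * q (2*n+1) 1 := by
    rw [← hqodd n r₁]
    have h2 := qso n 1 ⟨zero_le_one, le_refl 1⟩
    rw [mul_one] at h2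
    exact h2
  have hT2 : ∫ t in r₁..(1-r₂), q (2*n) t
      = (1-(r₁+r₂)) * ((r₁*m₁)^n * q (2*n) 1) := by
    have hc : ∀ t ∈ uIcc r₁ (1-r₂), q (2*n) t = q (2*n) r₁ := by
      rcases n with _ | j
      · intro t _
        simp [hq0]
      · intro t ht
        rw [uIcc_of_le h1r2] at ht
        rw [show 2*(j+1) = 2*j+2 by ring, hqeven j t, hqeven j r₁]
        exact muint_const_gap hsupp hr₁ hr₂ hss (q (2*j+1)) ht.1 ht.2
    rw [intervalIntegral.integral_congr hc, intervalIntegral.integral_const]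
    have hval := qse n 1 ⟨zero_le_one, le_refl 1⟩
    rw [mul_one] at hval
    rw [hval, smul_eq_mul]
    ring
  have hT3 : ∫ t in (1-r₂)..(r₂*x+1-r₂), q (2*n) t
      = r₂ * ∫ u in (0:ℝ)..x, q (2*n) (r₂*u+1-r₂) := by
    have h := intervalIntegral.integral_comp_mul_add (f := q (2*n)) (a := (0:ℝ)) (b := x)
      hr₂.ne' (1-r₂)
    have e3 : ∀ u : ℝ, r₂ * u + (1 - r₂) = r₂*u+1-r₂ := fun u => by ring
    simp only [e3, mul_zero, zero_add] at h
    rw [h, smul_eq_mul, ← mul_assoc, mul_inv_cancel₀ hr₂.ne', one_mul]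
  have hAint : ∫ u in (0:ℝ)..x, q (2*n) (r₂*u+1-r₂)
      = (∑ i ∈ Finset.range (n+1), (r₁*m₁)^i * (r₂*m₂)^(n-i) * q (2*i) 1 * q (2*n-2*i+1) x)
        + (∑ i ∈ Finset.range n, r₁^(i+1) * m₁^i * r₂^(n-i-1) * m₂^(n-i) * q (2*i+1) 1 * p (2*n-2*i) x)
        + (1-(r₁+r₂)) * ∑ i ∈ Finset.range n,
            (r₁*m₁)^i * r₂^(n-i-1) * m₂^(n-i) * q (2*i) 1 * p (2*n-2*i) x := by
    have hcg : ∀ u ∈ uIcc (0:ℝ) x, q (2*n) (r₂*u+1-r₂)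
        = (∑ i ∈ Finset.range (n+1), (r₁*m₁)^i * (r₂*m₂)^(n-i) * q (2*i) 1 * q (2*n-2*i) u)
          + (∑ i ∈ Finset.range n, r₁^(i+1) * m₁^i * r₂^(n-i-1) * m₂^(n-i) * q (2*i+1) 1 * p (2*n-2*i-1) u)
          + (1-(r₁+r₂)) * ∑ i ∈ Finset.range n,
              (r₁*m₁)^i * r₂^(n-i-1) * m₂^(n-i) * q (2*i) 1 * p (2*n-2*i-1) u := by
      intro u hu
      rw [uIcc_of_le hxl] at hu
      exact hD u ⟨hu.1, le_trans hu.2 hxu⟩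
    rw [intervalIntegral.integral_congr hcg]
    rw [iint_sum3 (fun i => q (2*n-2*i)) (fun i => p (2*n-2*i-1)) (fun i => p (2*n-2*i-1))
        (fun i => (r₁*m₁)^i * (r₂*m₂)^(n-i) * q (2*i) 1)
        (fun i => r₁^(i+1) * m₁^i * r₂^(n-i-1) * m₂^(n-i) * q (2*i+1) 1)
        (fun i => (r₁*m₁)^i * r₂^(n-i-1) * m₂^(n-i) * q (2*i) 1)
        (1-(r₁+r₂)) x (fun i _ => (qmono _).intervalIntegrable)
        (fun i _ => (pmono _).intervalIntegrable) (fun i _ => (pmono _).intervalIntegrable)]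
    congr 1
    · congr 1
      · refine Finset.sum_congr rfl fun i hi => ?_
        have hi' : i ≤ n := by simpa [Nat.lt_succ_iff] using hi
        congr 1
        have h := (hqodd (n-i) x).symm
        rw [show 2*(n-i) = 2*n-2*i by omega] at h
        exact h
      · refine Finset.sum_congr rfl fun i hi => ?_
        have hi' : i < n := Finset.mem_range.mp hi
        congr 1
        have h := (hpeven (n-i-1) x).symm
        rw [show 2*(n-i-1)+1 = 2*n-2*i-1 by omega, show 2*(n-i-1)+2 = 2*n-2*i by omega] at h
        exact h
    · congr 1
      refine Finset.sum_congr rfl fun i hi => ?_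
      have hi' : i < n := Finset.mem_range.mp hi
      congr 1
      have h := (hpeven (n-i-1) x).symm
      rw [show 2*(n-i-1)+1 = 2*n-2*i-1 by omega, show 2*(n-i-1)+2 = 2*n-2*i by omega] at h
      exact h
  have hR1 : ∑ i ∈ Finset.range (n+1), r₁^(i+1) * m₁^i * (r₂*m₂)^(n-i) * q (2*i+1) 1 * p (2*n-2*i) x
      = r₂ * (∑ i ∈ Finset.range n, r₁^(i+1) * m₁^i * r₂^(n-i-1) * m₂^(n-i) * q (2*i+1) 1 * p (2*n-2*i) x)
        + r₁^(n+1) * m₁^n * q (2*n+1) 1 := by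
    rw [Finset.sum_range_succ, Finset.mul_sum]
    congr 1
    · refine Finset.sum_congr rfl fun i hi => ?_
      have hi' : i < n := Finset.mem_range.mp hi
      obtain ⟨k, rfl⟩ : ∃ k, n = i + (k + 1) := ⟨n - i - 1, by omega⟩
      rw [show (i+(k+1))-i-1 = k by omega, show (i+(k+1))-i = k+1 by omega,
          show 2*(i+(k+1))-2*i = 2*k+2 by omega]
      ring
    · rw [Nat.sub_self, pow_zero, show 2*n-2*n = 0 by omega, hp0]
      ring
  have hR2 : ∑ i ∈ Finset.range (n+1), (r₁*m₁)^i * r₂^(n-i+1) * m₂^(n-i) * q (2*i) 1 * q (2*n-2*i+1) x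
      = r₂ * ∑ i ∈ Finset.range (n+1), (r₁*m₁)^i * (r₂*m₂)^(n-i) * q (2*i) 1 * q (2*n-2*i+1) x := by
    rw [Finset.mul_sum]
    refine Finset.sum_congr rfl fun i hi => ?_
    have hi' : i ≤ n := by simpa [Nat.lt_succ_iff] using hi
    obtain ⟨k, rfl⟩ : ∃ k, n = i + k := ⟨n - i, by omega⟩
    rw [show (i+k)-i = k by omega]
    ring
  have hR3 : ∑ i ∈ Finset.range (n+1), (r₁*m₁)^i * (r₂*m₂)^(n-i) * q (2*i) 1 * p (2*n-2*i) x
      = r₂ * (∑ i ∈ Finset.range n, (r₁*m₁)^i * r₂^(n-i-1) * m₂^(n-i) * q (2*i) 1 * p (2*n-2*i) x)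
        + (r₁*m₁)^n * q (2*n) 1 := by
    rw [Finset.sum_range_succ, Finset.mul_sum]
    congr 1
    · refine Finset.sum_congr rfl fun i hi => ?_
      have hi' : i < n := Finset.mem_range.mp hi
      obtain ⟨k, rfl⟩ : ∃ k, n = i + (k + 1) := ⟨n - i - 1, by omega⟩
      rw [show (i+(k+1))-i-1 = k by omega, show (i+(k+1))-i = k+1 by omega,
          show 2*(i+(k+1))-2*i = 2*k+2 by omega]
      ring
    · rw [Nat.sub_self, pow_zero, show 2*n-2*n = 0 by omega, hp0]
      ring
  rw [hL, ← e2, ← e1, hT1, hT2, hT3, hAint, hR1, hR2, hR3]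
  ring

lemma stepDC
    (hsupp : μ (Set.Icc (0:ℝ) 1)ᶜ = 0)
    (hr₁ : 0 < r₁) (hr₂ : 0 < r₂) (hm₁ : 0 < m₁) (hm₂ : 0 < m₂) (hrsum : r₁ + r₂ ≤ 1)
    (hss : μ = ENNReal.ofReal m₁ • Measure.map (fun x => r₁ * x) μ
           + ENNReal.ofReal m₂ • Measure.map (fun x => r₂ * x + 1 - r₂) μ)
    (hq0 : ∀ x : ℝ, q 0 x = 1)
    (hpodd : ∀ (n : ℕ) (x : ℝ), p (2*n+1) x = ∫ t in Set.Icc (0:ℝ) x, p (2*n) t ∂μ)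
    (hqeven : ∀ (n : ℕ) (x : ℝ), q (2*n+2) x = ∫ t in Set.Icc (0:ℝ) x, q (2*n+1) t ∂μ)
    (pmono : ∀ k, Monotone (p k)) (qmono : ∀ k, Monotone (q k))
    (qso : ∀ k, ∀ x ∈ Icc (0:ℝ) 1, q (2*k+1) (r₁*x) = (r₁^(k+1)*m₁^k) * q (2*k+1) x)
    (n : ℕ)
    (hC : ∀ x ∈ Icc (0:ℝ) 1, q (2*n+1) (r₂*x+1-r₂)
      = (∑ i ∈ Finset.range (n+1), r₁^(i+1) * m₁^i * (r₂*m₂)^(n-i) * q (2*i+1) 1 * p (2*n-2*i) x)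
        + (∑ i ∈ Finset.range (n+1), (r₁*m₁)^i * r₂^(n-i+1) * m₂^(n-i) * q (2*i) 1 * q (2*n-2*i+1) x)
        + (1-(r₁+r₂)) * ∑ i ∈ Finset.range (n+1),
            (r₁*m₁)^i * (r₂*m₂)^(n-i) * q (2*i) 1 * p (2*n-2*i) x) :
    ∀ x ∈ Icc (0:ℝ) 1, q (2*(n+1)) (r₂*x+1-r₂)
      = (∑ i ∈ Finset.range ((n+1)+1), (r₁*m₁)^i * (r₂*m₂)^((n+1)-i) * q (2*i) 1 * q (2*(n+1)-2*i) x)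
        + (∑ i ∈ Finset.range (n+1), r₁^(i+1) * m₁^i * r₂^((n+1)-i-1) * m₂^((n+1)-i) * q (2*i+1) 1 * p (2*(n+1)-2*i-1) x)
        + (1-(r₁+r₂)) * ∑ i ∈ Finset.range (n+1),
            (r₁*m₁)^i * r₂^((n+1)-i-1) * m₂^((n+1)-i) * q (2*i) 1 * p (2*(n+1)-2*i-1) x := by
  intro x hx
  have hL : q (2*(n+1)) (r₂*x+1-r₂)
      = ∫ t in Icc (0:ℝ) (r₂*x+1-r₂), q (2*n+1) t ∂μ := by
    rw [show 2*(n+1) = 2*n+2 by ring]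
    exact hqeven n _
  rw [hL, muint_L2 hsupp hr₁ hr₂ hm₁ hm₂ hrsum hss (q (2*n+1)) (qmono _) hx]
  have hI1 : ∫ t in Icc (0:ℝ) 1, q (2*n+1) (r₁*t) ∂μ = r₁^(n+1)*m₁^n * q (2*n+2) 1 := by
    have hcg : EqOn (fun t => q (2*n+1) (r₁*t)) (fun t => (r₁^(n+1)*m₁^n) * q (2*n+1) t)
        (Icc (0:ℝ) 1) := fun t ht => qso n t ht
    rw [setIntegral_congr_fun measurableSet_Icc hcg, integral_const_mul, ← hqeven n 1]
  have hI2 : ∫ t in Icc (0:ℝ) x, q (2*n+1) (r₂*t+1-r₂) ∂μ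
      = (∑ i ∈ Finset.range (n+1), r₁^(i+1) * m₁^i * (r₂*m₂)^(n-i) * q (2*i+1) 1 * p (2*n-2*i+1) x)
        + (∑ i ∈ Finset.range (n+1), (r₁*m₁)^i * r₂^(n-i+1) * m₂^(n-i) * q (2*i) 1 * q (2*n-2*i+2) x)
        + (1-(r₁+r₂)) * ∑ i ∈ Finset.range (n+1),
            (r₁*m₁)^i * (r₂*m₂)^(n-i) * q (2*i) 1 * p (2*n-2*i+1) x := by
    have hcg : EqOn (fun t => q (2*n+1) (r₂*t+1-r₂))
        (fun t => (∑ i ∈ Finset.range (n+1), r₁^(i+1) * m₁^i * (r₂*m₂)^(n-i) * q (2*i+1) 1 * p (2*n-2*i) t)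
          + (∑ i ∈ Finset.range (n+1), (r₁*m₁)^i * r₂^(n-i+1) * m₂^(n-i) * q (2*i) 1 * q (2*n-2*i+1) t)
          + (1-(r₁+r₂)) * ∑ i ∈ Finset.range (n+1),
              (r₁*m₁)^i * (r₂*m₂)^(n-i) * q (2*i) 1 * p (2*n-2*i) t) (Icc (0:ℝ) x) :=
      fun t ht => hC t ⟨ht.1, le_trans ht.2 hx.2⟩
    rw [setIntegral_congr_fun measurableSet_Icc hcg]
    rw [muint_sum3 (μ := μ) (fun i => p (2*n-2*i)) (fun i => q (2*n-2*i+1)) (fun i => p (2*n-2*i))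
        (fun i => r₁^(i+1) * m₁^i * (r₂*m₂)^(n-i) * q (2*i+1) 1)
        (fun i => (r₁*m₁)^i * r₂^(n-i+1) * m₂^(n-i) * q (2*i) 1)
        (fun i => (r₁*m₁)^i * (r₂*m₂)^(n-i) * q (2*i) 1)
        (1-(r₁+r₂)) x (fun i _ => integrableOn_Icc (p (2*n-2*i)) (pmono _) x)
        (fun i _ => integrableOn_Icc (q (2*n-2*i+1)) (qmono _) x)
        (fun i _ => integrableOn_Icc (p (2*n-2*i)) (pmono _) x)]
    congr 1
    · congr 1
      · refine Finset.sum_congr rfl fun i hi => ?_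
        have hi' : i ≤ n := by simpa [Nat.lt_succ_iff] using hi
        congr 1
        have h := (hpodd (n-i) x).symm
        rw [show 2*(n-i) = 2*n-2*i by omega] at h
        exact h
      · refine Finset.sum_congr rfl fun i hi => ?_
        have hi' : i ≤ n := by simpa [Nat.lt_succ_iff] using hi
        congr 1
        have h := (hqeven (n-i) x).symm
        rw [show 2*(n-i) = 2*n-2*i by omega] at h
        exact h
    · congr 1
      refine Finset.sum_congr rfl fun i hi => ?_
      have hi' : i ≤ n := by simpa [Nat.lt_succ_iff] using hi
      congr 1
      have h := (hpodd (n-i) x).symm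
      rw [show 2*(n-i) = 2*n-2*i by omega] at h
      exact h
  have hRD1 : ∑ i ∈ Finset.range ((n+1)+1), (r₁*m₁)^i * (r₂*m₂)^((n+1)-i) * q (2*i) 1 * q (2*(n+1)-2*i) x
      = m₂ * (∑ i ∈ Finset.range (n+1), (r₁*m₁)^i * r₂^(n-i+1) * m₂^(n-i) * q (2*i) 1 * q (2*n-2*i+2) x)
        + (r₁*m₁)^(n+1) * q (2*n+2) 1 := by
    rw [Finset.sum_range_succ, Finset.mul_sum]
    congr 1
    · refine Finset.sum_congr rfl fun i hi => ?_
      have hi' : i ≤ n := by simpa [Nat.lt_succ_iff] using hi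
      obtain ⟨k, rfl⟩ : ∃ k, n = i + k := ⟨n - i, by omega⟩
      rw [show (i+k)+1-i = k+1 by omega, show 2*((i+k)+1)-2*i = 2*k+2 by omega,
          show (i+k)-i = k by omega, show 2*(i+k)-2*i = 2*k by omega]
      ring
    · rw [Nat.sub_self, pow_zero, show 2*((n+1))-2*(n+1) = 0 by omega, hq0,
          show 2*(n+1) = 2*n+2 by ring]
      ring
  have hRD2 : ∑ i ∈ Finset.range (n+1), r₁^(i+1) * m₁^i * r₂^((n+1)-i-1) * m₂^((n+1)-i) * q (2*i+1) 1 * p (2*(n+1)-2*i-1) x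
      = m₂ * ∑ i ∈ Finset.range (n+1), r₁^(i+1) * m₁^i * (r₂*m₂)^(n-i) * q (2*i+1) 1 * p (2*n-2*i+1) x := by
    rw [Finset.mul_sum]
    refine Finset.sum_congr rfl fun i hi => ?_
    have hi' : i ≤ n := by simpa [Nat.lt_succ_iff] using hi
    obtain ⟨k, rfl⟩ : ∃ k, n = i + k := ⟨n - i, by omega⟩
    rw [show (i+k)+1-i-1 = k by omega, show (i+k)+1-i = k+1 by omega,
        show 2*((i+k)+1)-2*i-1 = 2*k+1 by omega, show (i+k)-i = k by omega,
        show 2*(i+k)-2*i = 2*k by omega]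
    ring
  have hRD3 : ∑ i ∈ Finset.range (n+1), (r₁*m₁)^i * r₂^((n+1)-i-1) * m₂^((n+1)-i) * q (2*i) 1 * p (2*(n+1)-2*i-1) x
      = m₂ * ∑ i ∈ Finset.range (n+1), (r₁*m₁)^i * (r₂*m₂)^(n-i) * q (2*i) 1 * p (2*n-2*i+1) x := by
    rw [Finset.mul_sum]
    refine Finset.sum_congr rfl fun i hi => ?_
    have hi' : i ≤ n := by simpa [Nat.lt_succ_iff] using hi
    obtain ⟨k, rfl⟩ : ∃ k, n = i + k := ⟨n - i, by omega⟩
    rw [show (i+k)+1-i-1 = k by omega, show (i+k)+1-i = k+1 by omega,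
        show 2*((i+k)+1)-2*i-1 = 2*k+1 by omega, show (i+k)-i = k by omega,
        show 2*(i+k)-2*i = 2*k by omega]
    ring
  rw [hI1, hI2, hRD1, hRD2, hRD3]
  ring


lemma p_main
    (hsupp : μ (Set.Icc (0:ℝ) 1)ᶜ = 0)
    (hr₁ : 0 < r₁) (hr₂ : 0 < r₂) (hm₁ : 0 < m₁) (hm₂ : 0 < m₂) (hrsum : r₁ + r₂ ≤ 1)
    (hss : μ = ENNReal.ofReal m₁ • Measure.map (fun x => r₁ * x) μ
           + ENNReal.ofReal m₂ • Measure.map (fun x => r₂ * x + 1 - r₂) μ)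
    (hp0 : ∀ x : ℝ, p 0 x = 1) (hq0 : ∀ x : ℝ, q 0 x = 1)
    (hpodd : ∀ (n : ℕ) (x : ℝ), p (2*n+1) x = ∫ t in Set.Icc (0:ℝ) x, p (2*n) t ∂μ)
    (hpeven : ∀ (n : ℕ) (x : ℝ), p (2*n+2) x = ∫ t in (0:ℝ)..x, p (2*n+1) t)
    (hqodd : ∀ (n : ℕ) (x : ℝ), q (2*n+1) x = ∫ t in (0:ℝ)..x, q (2*n) t)
    (hqeven : ∀ (n : ℕ) (x : ℝ), q (2*n+2) x = ∫ t in Set.Icc (0:ℝ) x, q (2*n+1) t ∂μ)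
    (pmono : ∀ k, Monotone (p k)) (qmono : ∀ k, Monotone (q k))
    (pse : ∀ k, ∀ x ∈ Icc (0:ℝ) 1, p (2*k) (r₁*x) = (r₁*m₁)^k * p (2*k) x)
    (pso : ∀ k, ∀ x ∈ Icc (0:ℝ) 1, p (2*k+1) (r₁*x) = (r₁^k*m₁^(k+1)) * p (2*k+1) x) :
    ∀ n : ℕ,
      (∀ x ∈ Icc (0:ℝ) 1, p (2*n) (r₂*x+1-r₂)
        = (∑ i ∈ Finset.range (n+1), (r₁*m₁)^i * (r₂*m₂)^(n-i) * p (2*i) 1 * p (2*n-2*i) x)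
          + (∑ i ∈ Finset.range n, r₁^i * m₁^(i+1) * r₂^(n-i) * m₂^(n-i-1) * p (2*i+1) 1 * q (2*n-2*i-1) x)
          + (1-(r₁+r₂)) * ∑ i ∈ Finset.range n,
              r₁^i * m₁^(i+1) * (r₂*m₂)^(n-i-1) * p (2*i+1) 1 * p (2*n-2*i-2) x)
      ∧ (∀ x ∈ Icc (0:ℝ) 1, p (2*n+1) (r₂*x+1-r₂)
        = (∑ i ∈ Finset.range (n+1), r₁^i * m₁^(i+1) * (r₂*m₂)^(n-i) * p (2*i+1) 1 * q (2*n-2*i) x)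
          + (∑ i ∈ Finset.range (n+1), (r₁*m₁)^i * r₂^(n-i) * m₂^(n-i+1) * p (2*i) 1 * p (2*n-2*i+1) x)
          + (1-(r₁+r₂)) * ∑ i ∈ Finset.range n,
              r₁^i * m₁^(i+1) * r₂^(n-i-1) * m₂^(n-i) * p (2*i+1) 1 * p (2*n-2*i-1) x) := by
  intro n
  induction n with
  | zero =>
    have hB0 : ∀ x ∈ Icc (0:ℝ) 1, p (2*0) (r₂*x+1-r₂)
        = (∑ i ∈ Finset.range (0+1), (r₁*m₁)^i * (r₂*m₂)^(0-i) * p (2*i) 1 * p (2*0-2*i) x)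
          + (∑ i ∈ Finset.range 0, r₁^i * m₁^(i+1) * r₂^(0-i) * m₂^(0-i-1) * p (2*i+1) 1 * q (2*0-2*i-1) x)
          + (1-(r₁+r₂)) * ∑ i ∈ Finset.range 0,
              r₁^i * m₁^(i+1) * (r₂*m₂)^(0-i-1) * p (2*i+1) 1 * p (2*0-2*i-2) x := by
      intro x _
      simp [hp0]
    exact ⟨hB0, stepAB hsupp hr₁ hr₂ hm₁ hm₂ hrsum hss hq0 hpodd hqeven pmono qmono pse 0 hB0⟩
  | succ n ih =>
    have hB := stepBA hsupp hr₁ hr₂ hm₁ hm₂ hrsum hss hp0 hpodd hpeven hqodd pmono qmono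
      pse pso n ih.2
    exact ⟨hB, stepAB hsupp hr₁ hr₂ hm₁ hm₂ hrsum hss hq0 hpodd hqeven pmono qmono pse (n+1) hB⟩

lemma q_main
    (hsupp : μ (Set.Icc (0:ℝ) 1)ᶜ = 0)
    (hr₁ : 0 < r₁) (hr₂ : 0 < r₂) (hm₁ : 0 < m₁) (hm₂ : 0 < m₂) (hrsum : r₁ + r₂ ≤ 1)
    (hss : μ = ENNReal.ofReal m₁ • Measure.map (fun x => r₁ * x) μ
           + ENNReal.ofReal m₂ • Measure.map (fun x => r₂ * x + 1 - r₂) μ)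
    (hp0 : ∀ x : ℝ, p 0 x = 1) (hq0 : ∀ x : ℝ, q 0 x = 1)
    (hpodd : ∀ (n : ℕ) (x : ℝ), p (2*n+1) x = ∫ t in Set.Icc (0:ℝ) x, p (2*n) t ∂μ)
    (hpeven : ∀ (n : ℕ) (x : ℝ), p (2*n+2) x = ∫ t in (0:ℝ)..x, p (2*n+1) t)
    (hqodd : ∀ (n : ℕ) (x : ℝ), q (2*n+1) x = ∫ t in (0:ℝ)..x, q (2*n) t)
    (hqeven : ∀ (n : ℕ) (x : ℝ), q (2*n+2) x = ∫ t in Set.Icc (0:ℝ) x, q (2*n+1) t ∂μ)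
    (pmono : ∀ k, Monotone (p k)) (qmono : ∀ k, Monotone (q k))
    (qse : ∀ k, ∀ x ∈ Icc (0:ℝ) 1, q (2*k) (r₁*x) = (r₁*m₁)^k * q (2*k) x)
    (qso : ∀ k, ∀ x ∈ Icc (0:ℝ) 1, q (2*k+1) (r₁*x) = (r₁^(k+1)*m₁^k) * q (2*k+1) x) :
    ∀ n : ℕ,
      (∀ x ∈ Icc (0:ℝ) 1, q (2*n) (r₂*x+1-r₂)
        = (∑ i ∈ Finset.range (n+1), (r₁*m₁)^i * (r₂*m₂)^(n-i) * q (2*i) 1 * q (2*n-2*i) x)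
          + (∑ i ∈ Finset.range n, r₁^(i+1) * m₁^i * r₂^(n-i-1) * m₂^(n-i) * q (2*i+1) 1 * p (2*n-2*i-1) x)
          + (1-(r₁+r₂)) * ∑ i ∈ Finset.range n,
              (r₁*m₁)^i * r₂^(n-i-1) * m₂^(n-i) * q (2*i) 1 * p (2*n-2*i-1) x)
      ∧ (∀ x ∈ Icc (0:ℝ) 1, q (2*n+1) (r₂*x+1-r₂)
        = (∑ i ∈ Finset.range (n+1), r₁^(i+1) * m₁^i * (r₂*m₂)^(n-i) * q (2*i+1) 1 * p (2*n-2*i) x)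
          + (∑ i ∈ Finset.range (n+1), (r₁*m₁)^i * r₂^(n-i+1) * m₂^(n-i) * q (2*i) 1 * q (2*n-2*i+1) x)
          + (1-(r₁+r₂)) * ∑ i ∈ Finset.range (n+1),
              (r₁*m₁)^i * (r₂*m₂)^(n-i) * q (2*i) 1 * p (2*n-2*i) x) := by
  intro n
  induction n with
  | zero =>
    have hD0 : ∀ x ∈ Icc (0:ℝ) 1, q (2*0) (r₂*x+1-r₂)
        = (∑ i ∈ Finset.range (0+1), (r₁*m₁)^i * (r₂*m₂)^(0-i) * q (2*i) 1 * q (2*0-2*i) x)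
          + (∑ i ∈ Finset.range 0, r₁^(i+1) * m₁^i * r₂^(0-i-1) * m₂^(0-i) * q (2*i+1) 1 * p (2*0-2*i-1) x)
          + (1-(r₁+r₂)) * ∑ i ∈ Finset.range 0,
              (r₁*m₁)^i * r₂^(0-i-1) * m₂^(0-i) * q (2*i) 1 * p (2*0-2*i-1) x := by
      intro x _
      simp [hq0]
    exact ⟨hD0, stepCD hsupp hr₁ hr₂ hm₁ hm₂ hrsum hss hp0 hq0 hpeven hqodd hqeven
      pmono qmono qse qso 0 hD0⟩
  | succ n ih =>
    have hD := stepDC hsupp hr₁ hr₂ hm₁ hm₂ hrsum hss hq0 hpodd hqeven pmono qmono qso n ih.2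
    exact ⟨hD, stepCD hsupp hr₁ hr₂ hm₁ hm₂ hrsum hss hp0 hq0 hpeven hqodd hqeven
      pmono qmono qse qso (n+1) hD⟩

end Families

end Stmt17Aux

theorem stmt_17
    (μ : Measure ℝ) [IsProbabilityMeasure μ] [NullSingletonClass μ]
    (hsupp : μ (Set.Icc (0:ℝ) 1)ᶜ = 0)
    (r₁ r₂ m₁ m₂ : ℝ)
    (hr₁ : 0 < r₁) (hr₂ : 0 < r₂) (hm₁ : 0 < m₁) (hm₂ : 0 < m₂)
    (hrsum : r₁ + r₂ ≤ 1) (hmsum : m₁ + m₂ = 1)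
    (hss : μ = ENNReal.ofReal m₁ • Measure.map (fun x => r₁ * x) μ
           + ENNReal.ofReal m₂ • Measure.map (fun x => r₂ * x + 1 - r₂) μ)
    (p q : ℕ → ℝ → ℝ)
    (hp0 : ∀ x : ℝ, p 0 x = 1) (hq0 : ∀ x : ℝ, q 0 x = 1)
    (hpodd : ∀ (n : ℕ) (x : ℝ), p (2*n+1) x = ∫ t in Set.Icc (0:ℝ) x, p (2*n) t ∂μ)
    (hpeven : ∀ (n : ℕ) (x : ℝ), p (2*n+2) x = ∫ t in (0:ℝ)..x, p (2*n+1) t)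
    (hqodd : ∀ (n : ℕ) (x : ℝ), q (2*n+1) x = ∫ t in (0:ℝ)..x, q (2*n) t)
    (hqeven : ∀ (n : ℕ) (x : ℝ), q (2*n+2) x = ∫ t in Set.Icc (0:ℝ) x, q (2*n+1) t ∂μ) :
    (∀ n : ℕ,
      p (2*n+1) 1 =
        (∑ i ∈ Finset.range (n+1), r₁^i * m₁^(i+1) * (r₂*m₂)^(n-i) * p (2*i+1) 1 * q (2*n-2*i) 1)
        + (∑ i ∈ Finset.range (n+1), (r₁*m₁)^i * r₂^(n-i) * m₂^(n-i+1) * p (2*i) 1 * p (2*n-2*i+1) 1)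
        + (1-(r₁+r₂)) * ∑ i ∈ Finset.range n,
            r₁^i * m₁^(i+1) * r₂^(n-i-1) * m₂^(n-i) * p (2*i+1) 1 * p (2*n-2*i-1) 1) ∧
    (∀ n : ℕ, 1 ≤ n →
      p (2*n) 1 =
        (∑ i ∈ Finset.range (n+1), (r₁*m₁)^i * (r₂*m₂)^(n-i) * p (2*i) 1 * p (2*n-2*i) 1)
        + (∑ i ∈ Finset.range n, r₁^i * m₁^(i+1) * r₂^(n-i) * m₂^(n-i-1) * p (2*i+1) 1 * q (2*n-2*i-1) 1)
        + (1-(r₁+r₂)) * ∑ i ∈ Finset.range n,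
            r₁^i * m₁^(i+1) * (r₂*m₂)^(n-i-1) * p (2*i+1) 1 * p (2*n-2*i-2) 1) ∧
    (∀ n : ℕ,
      q (2*n+1) 1 =
        (∑ i ∈ Finset.range (n+1), r₁^(i+1) * m₁^i * (r₂*m₂)^(n-i) * q (2*i+1) 1 * p (2*n-2*i) 1)
        + (∑ i ∈ Finset.range (n+1), (r₁*m₁)^i * r₂^(n-i+1) * m₂^(n-i) * q (2*i) 1 * q (2*n-2*i+1) 1)
        + (1-(r₁+r₂)) * ∑ i ∈ Finset.range (n+1),
            (r₁*m₁)^i * (r₂*m₂)^(n-i) * q (2*i) 1 * p (2*n-2*i) 1) ∧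
    (∀ n : ℕ, 1 ≤ n →
      q (2*n) 1 =
        (∑ i ∈ Finset.range (n+1), (r₁*m₁)^i * (r₂*m₂)^(n-i) * q (2*i) 1 * q (2*n-2*i) 1)
        + (∑ i ∈ Finset.range n, r₁^(i+1) * m₁^i * r₂^(n-i-1) * m₂^(n-i) * q (2*i+1) 1 * p (2*n-2*i-1) 1)
        + (1-(r₁+r₂)) * ∑ i ∈ Finset.range n,
            (r₁*m₁)^i * r₂^(n-i-1) * m₂^(n-i) * q (2*i) 1 * p (2*n-2*i-1) 1) := by
  have hpn := Stmt17Aux.p_nice (μ := μ) hp0 hpodd hpeven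
  have hqn := Stmt17Aux.q_nice (μ := μ) hq0 hqodd hqeven
  have pmono : ∀ k, Monotone (p k) := by
    intro k
    rcases Nat.even_or_odd k with ⟨m, hm⟩ | ⟨m, hm⟩
    · have h := (hpn m).1.1
      rwa [show 2*m = k by omega] at h
    · have h := (hpn m).2.1
      rwa [show 2*m+1 = k by omega] at h
  have qmono : ∀ k, Monotone (q k) := by
    intro k
    rcases Nat.even_or_odd k with ⟨m, hm⟩ | ⟨m, hm⟩
    · have h := (hqn m).1.1
      rwa [show 2*m = k by omega] at h
    · have h := (hqn m).2.1
      rwa [show 2*m+1 = k by omega] at h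
  have hps := Stmt17Aux.p_scale hsupp hr₁ hr₂ hm₁ hm₂ hrsum hss hp0 hpodd hpeven
  have hqs := Stmt17Aux.q_scale hsupp hr₁ hr₂ hm₁ hm₂ hrsum hss hq0 hqodd hqeven
  have hpm := Stmt17Aux.p_main hsupp hr₁ hr₂ hm₁ hm₂ hrsum hss hp0 hq0 hpodd hpeven hqodd hqeven
    pmono qmono (fun k => (hps k).1) (fun k => (hps k).2)
  have hqm := Stmt17Aux.q_main hsupp hr₁ hr₂ hm₁ hm₂ hrsum hss hp0 hq0 hpodd hpeven hqodd hqeven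
    pmono qmono (fun k => (hqs k).1) (fun k => (hqs k).2)
  have h1 : (1:ℝ) ∈ Set.Icc (0:ℝ) 1 := ⟨zero_le_one, le_refl 1⟩
  have hy1 : r₂*(1:ℝ)+1-r₂ = 1 := by ring
  refine ⟨?_, ?_, ?_, ?_⟩
  · intro n
    have h := (hpm n).2 1 h1
    rwa [hy1] at h
  · intro n _
    have h := (hpm n).1 1 h1
    rwa [hy1] at h
  · intro n
    have h := (hqm n).2 1 h1
    rwa [hy1] at h
  · intro n _
    have h := (hqm n).1 1 h1
    rwa [hy1] at h
end

section
/- Suppose additionally that r₁ = m₂ and r₂ = m₁ (so in particular r₁ + r₂ = 1). Then p_{2n+1}(1) = q_{2n+1}(1) for every n ∈ ℕ₀, and consequently sin^N_μ(z) = sin^D_μ(z) for all z ∈ ℝ; in particular the positive zeros of sin^N_μ and of sin^D_μ coincide (i.e. the positive Neumann eigenvalues of −(d/dμ)(d/dx) coincide with its Dirichlet eigenvalues). -/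
open MeasureTheory Set ProbabilityTheory Filter Topology

/-!
Write `V_α f x = ∫_{[0,x]} f dα` (`integralFromZero`) and `W_α f x = ∫_{[x,1]} f dα`
(`integralToOne`), and let `λ` be Lebesgue measure.
By Fubini, `W_ρ` is the adjoint of `V_ν`: `⟨V_ν f, g⟩_ρ = ⟨f, W_ρ g⟩_ν` for the pairings
`⟨f, g⟩_α = ∫_{[0,1]} f g dα`. Hence `p_{2n+1}(1) = ⟨(V_λ V_μ)ⁿ 1, 1⟩_μ = (W_μ (W_λ W_μ)ⁿ 1)(0)`.

When `r₁ = m₂` and `r₂ = m₁`, the self-similarity of the distribution function `F` of `μ` shows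
that `d t = F (1 - F t) - (1 - t)` satisfies `d (r₁ s) = r₁ d s` and `d (r₂ s + 1 - r₂) = r₂ d s`,
so the bounded function `d` vanishes on `[0, 1]` because `r₁, r₂ < 1`. Thus `T = 1 - F` is an
order-reversing involution of `[0, 1]` carrying `λ` to `μ`, and conjugation by `T` turns
`V_λ, V_μ` into `W_μ, W_λ`; this gives the same value `(W_μ (W_λ W_μ)ⁿ 1)(0)` for `q_{2n+1}(1)`.
-/

noncomputable section

namespace SelfSimilarSine

def integralFromZero (α : Measure ℝ) (f : ℝ → ℝ) (x : ℝ) : ℝ := ∫ t in Icc 0 x, f t ∂α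

def integralToOne (α : Measure ℝ) (f : ℝ → ℝ) (x : ℝ) : ℝ := ∫ t in Icc x 1, f t ∂α

variable {α β : Measure ℝ} {f g : ℝ → ℝ}

lemma intervalIntegral_eq_integralFromZero {x : ℝ} (hx : 0 ≤ x) :
    ∫ t in (0:ℝ)..x, f t = integralFromZero volume f x := by
  rw [intervalIntegral.integral_of_le hx, integralFromZero, integral_Icc_eq_integral_Ioc]

lemma integralFromZero_congr {x : ℝ} (h : EqOn f g (Icc 0 1)) (hx : x ≤ 1) :
    integralFromZero α f x = integralFromZero α g x :=
  setIntegral_congr_fun measurableSet_Icc fun _ ht => h ⟨ht.1, ht.2.trans hx⟩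

lemma measurable_setIntegral_of_measurableSet_graph [SFinite α] (hf : Measurable f)
    {S : ℝ → Set ℝ} (hS : MeasurableSet {z : ℝ × ℝ | z.2 ∈ S z.1}) :
    Measurable fun x => ∫ t in S x, f t ∂α := by
  have hG : StronglyMeasurable ({z : ℝ × ℝ | z.2 ∈ S z.1}.indicator fun z => f z.2) :=
    ((hf.comp measurable_snd).indicator hS).stronglyMeasurable
  convert (hG.integral_prod_right' (ν := α)).measurable using 2 with x
  exact (integral_indicator (measurable_prodMk_left hS)).symm

lemma measurable_integralFromZero [SFinite α] (hf : Measurable f) :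
    Measurable (integralFromZero α f) :=
  measurable_setIntegral_of_measurableSet_graph hf
    ((measurableSet_le measurable_const measurable_snd).inter
      (measurableSet_le measurable_snd measurable_fst))

lemma measurable_integralToOne [SFinite α] (hf : Measurable f) :
    Measurable (integralToOne α f) :=
  measurable_setIntegral_of_measurableSet_graph hf
    ((measurableSet_le measurable_fst measurable_snd).inter
      (measurableSet_le measurable_snd measurable_const))

lemma measurable_iterate_integralToOne [SFinite α] [SFinite β] (k : ℕ) :
    Measurable ((integralToOne α ∘ integralToOne β)^[k] 1) :=
  Function.Iterate.rec _ measurable_const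
    (fun _ h => measurable_integralToOne (measurable_integralToOne h)) k

def MeasurableBddOnUnit (f : ℝ → ℝ) : Prop :=
  Measurable f ∧ ∃ C, ∀ t ∈ Icc (0:ℝ) 1, |f t| ≤ C

lemma MeasurableBddOnUnit.integrableOn [IsFiniteMeasureOnCompacts α]
    (hf : MeasurableBddOnUnit f) : IntegrableOn f (Icc 0 1) α := by
  obtain ⟨hm, C, hC⟩ := hf
  exact Measure.integrableOn_of_bounded isCompact_Icc.measure_lt_top.ne hm.aestronglyMeasurable
    ((ae_restrict_mem measurableSet_Icc).mono hC)

lemma abs_setIntegral_le_of_subset_Icc [IsFiniteMeasureOnCompacts α] {s : Set ℝ}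
    (hs : s ⊆ Icc 0 1) {C : ℝ} (hC : ∀ t ∈ Icc (0:ℝ) 1, |f t| ≤ C) :
    |∫ t in s, f t ∂α| ≤ C * α.real (Icc 0 1) := by
  have hC0 : 0 ≤ C := (abs_nonneg _).trans (hC 0 ⟨le_rfl, zero_le_one⟩)
  have hfin := (isCompact_Icc (a := (0:ℝ)) (b := 1)).measure_lt_top (μ := α)
  calc |∫ t in s, f t ∂α| ≤ C * α.real s :=
        norm_setIntegral_le_of_norm_le_const ((measure_mono hs).trans_lt hfin)
          fun t ht => (Real.norm_eq_abs _).trans_le (hC t (hs ht))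
    _ ≤ C * α.real (Icc 0 1) := by gcongr; exact hfin.ne

lemma MeasurableBddOnUnit.integralFromZero [IsFiniteMeasureOnCompacts α]
    (hf : MeasurableBddOnUnit f) : MeasurableBddOnUnit (integralFromZero α f) := by
  obtain ⟨hm, C, hC⟩ := hf
  exact ⟨measurable_integralFromZero hm, _, fun x hx =>
    abs_setIntegral_le_of_subset_Icc (Icc_subset_Icc_right hx.2) hC⟩

lemma MeasurableBddOnUnit.integralToOne [IsFiniteMeasureOnCompacts α]
    (hf : MeasurableBddOnUnit f) : MeasurableBddOnUnit (integralToOne α f) := by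
  obtain ⟨hm, C, hC⟩ := hf
  exact ⟨measurable_integralToOne hm, _, fun x hx =>
    abs_setIntegral_le_of_subset_Icc (Icc_subset_Icc_left hx.1) hC⟩

lemma setIntegral_integralFromZero_mul [SFinite α] [SFinite β]
    (hf : IntegrableOn f (Icc 0 1) α) (hg : IntegrableOn g (Icc 0 1) β) :
    ∫ t in Icc 0 1, integralFromZero α f t * g t ∂β
      = ∫ s in Icc 0 1, f s * integralToOne β g s ∂α := by
  set G : ℝ → ℝ → ℝ := fun t s => {z : ℝ × ℝ | z.2 ≤ z.1}.indicator (fun z => f z.2 * g z.1) (t, s)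
  have hG : Integrable (Function.uncurry G)
      ((β.restrict (Icc 0 1)).prod (α.restrict (Icc 0 1))) := by
    refine Integrable.indicator ?_ (measurableSet_le measurable_snd measurable_fst)
    simpa only [mul_comm] using hg.mul_prod hf
  have hleft : ∀ t ∈ Icc (0:ℝ) 1, integralFromZero α f t * g t = ∫ s in Icc 0 1, G t s ∂α := by
    intro t ht
    have hset : Icc 0 1 ∩ Iic t = Icc 0 t := by
      ext s
      simp only [mem_inter_iff, mem_Icc, mem_Iic]
      exact ⟨fun h => ⟨h.1.1, h.2⟩, fun h => ⟨⟨h.1, h.2.trans ht.2⟩, h.2⟩⟩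
    simp only [G, integralFromZero, ← integral_mul_const]
    rw [← hset, ← setIntegral_indicator measurableSet_Iic]
    rfl
  have hright : ∀ s ∈ Icc (0:ℝ) 1, f s * integralToOne β g s = ∫ t in Icc 0 1, G t s ∂β := by
    intro s hs
    have hset : Icc 0 1 ∩ Ici s = Icc s 1 := by
      ext t
      simp only [mem_inter_iff, mem_Icc, mem_Ici]
      exact ⟨fun h => ⟨h.2, h.1.2⟩, fun h => ⟨⟨hs.1.trans h.1, h.2⟩, h.1⟩⟩
    simp only [G, integralToOne, ← integral_const_mul]
    rw [← hset, ← setIntegral_indicator measurableSet_Ici]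
    rfl
  rw [setIntegral_congr_fun measurableSet_Icc hleft, setIntegral_congr_fun measurableSet_Icc hright,
    integral_integral_swap hG]

lemma measurableBddOnUnit_one : MeasurableBddOnUnit 1 :=
  ⟨measurable_const, 1, fun _ _ => by simp⟩

lemma MeasurableBddOnUnit.iterate {Φ : (ℝ → ℝ) → ℝ → ℝ}
    (hΦ : ∀ f, MeasurableBddOnUnit f → MeasurableBddOnUnit (Φ f)) (hf : MeasurableBddOnUnit f)
    (k : ℕ) : MeasurableBddOnUnit (Φ^[k] f) :=
  Function.Iterate.rec _ hf hΦ k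

lemma setIntegral_iterate_mul [IsFiniteMeasureOnCompacts α] [IsFiniteMeasureOnCompacts β]
    (hf : MeasurableBddOnUnit f) (hg : MeasurableBddOnUnit g) (k : ℕ) :
    ∫ t in Icc 0 1, (integralFromZero β ∘ integralFromZero α)^[k] f t * g t ∂α
      = ∫ t in Icc 0 1, f t * (integralToOne β ∘ integralToOne α)^[k] g t ∂α := by
  induction k generalizing f with
  | zero => rfl
  | succ k ih =>
    have hg' := hg.iterate (Φ := integralToOne β ∘ integralToOne α)
      (fun _ h => h.integralToOne.integralToOne) k
    rw [Function.iterate_succ_apply,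
      ih (f := (integralFromZero β ∘ integralFromZero α) f) hf.integralFromZero.integralFromZero,
      Function.iterate_succ_apply', Function.comp_apply, Function.comp_apply,
      setIntegral_integralFromZero_mul hf.integralFromZero.integrableOn hg'.integrableOn,
      setIntegral_integralFromZero_mul hf.integrableOn hg'.integralToOne.integrableOn]

lemma integralFromZero_iterate_one_eq_integralToOne [IsFiniteMeasureOnCompacts α]
    [IsFiniteMeasureOnCompacts β] (k : ℕ) :
    integralFromZero α ((integralFromZero β ∘ integralFromZero α)^[k] 1) 1
      = integralToOne α ((integralToOne β ∘ integralToOne α)^[k] 1) 0 := by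
  simpa [integralFromZero, integralToOne] using
    setIntegral_iterate_mul measurableBddOnUnit_one measurableBddOnUnit_one k (α := α) (β := β)

lemma apply_odd_one_of_recursion {F : ℕ → ℝ → ℝ} (h0 : ∀ x, F 0 x = 1)
    (hodd : ∀ n, ∀ x ∈ Icc (0:ℝ) 1, F (2 * n + 1) x = integralFromZero α (F (2 * n)) x)
    (heven : ∀ n, ∀ x ∈ Icc (0:ℝ) 1, F (2 * n + 2) x = integralFromZero β (F (2 * n + 1)) x)
    (n : ℕ) :
    F (2 * n + 1) 1 = integralFromZero α ((integralFromZero β ∘ integralFromZero α)^[n] 1) 1 := by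
  have hF : ∀ k, EqOn (F (2 * k)) ((integralFromZero β ∘ integralFromZero α)^[k] 1) (Icc 0 1) := by
    intro k
    induction k with
    | zero => exact fun x _ => h0 x
    | succ k ih =>
      intro x hx
      rw [Function.iterate_succ_apply', Function.comp_apply, mul_add, mul_one, heven k x hx]
      refine integralFromZero_congr (fun t ht => ?_) hx.2
      rw [hodd k t ht, integralFromZero_congr ih ht.2]
  rw [hodd n 1 ⟨zero_le_one, le_rfl⟩, integralFromZero_congr (hF n) le_rfl]

lemma setIntegral_eq_of_map_eq {T : ℝ → ℝ} (hTm : Measurable T)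
    (hmap : (α.restrict (Icc 0 1)).map T = β) (hg : Measurable g) {S : Set ℝ}
    (hS : MeasurableSet S) :
    ∫ t in S, g t ∂β = ∫ u in Icc 0 1 ∩ T ⁻¹' S, g (T u) ∂α := by
  rw [← hmap, setIntegral_map hS hg.aestronglyMeasurable hTm.aemeasurable,
    Measure.restrict_restrict (hTm hS), inter_comm]

structure IsReflection (T : ℝ → ℝ) : Prop where
  mapsTo : MapsTo T (Icc 0 1) (Icc 0 1)
  antitoneOn : AntitoneOn T (Icc 0 1)
  apply_apply : ∀ t ∈ Icc (0:ℝ) 1, T (T t) = t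

namespace IsReflection

variable {T : ℝ → ℝ} {x u : ℝ}

lemma le_apply_iff (hT : IsReflection T) (hx : x ∈ Icc (0:ℝ) 1) (hu : u ∈ Icc (0:ℝ) 1) :
    x ≤ T u ↔ u ≤ T x :=
  ⟨fun h => hT.apply_apply u hu ▸ hT.antitoneOn hx (hT.mapsTo hu) h,
    fun h => hT.apply_apply x hx ▸ hT.antitoneOn hu (hT.mapsTo hx) h⟩

lemma apply_le_iff (hT : IsReflection T) (hx : x ∈ Icc (0:ℝ) 1) (hu : u ∈ Icc (0:ℝ) 1) :
    T u ≤ x ↔ T x ≤ u :=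
  ⟨fun h => hT.apply_apply u hu ▸ hT.antitoneOn (hT.mapsTo hu) hx h,
    fun h => hT.apply_apply x hx ▸ hT.antitoneOn (hT.mapsTo hx) hu h⟩

lemma apply_one (hT : IsReflection T) : T 1 = 0 :=
  le_antisymm ((hT.apply_le_iff ⟨le_rfl, zero_le_one⟩ ⟨zero_le_one, le_rfl⟩).2
    (hT.mapsTo ⟨le_rfl, zero_le_one⟩).2) (hT.mapsTo ⟨zero_le_one, le_rfl⟩).1

lemma inter_preimage_Icc_apply (hT : IsReflection T) (hx : x ∈ Icc (0:ℝ) 1) :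
    Icc 0 1 ∩ T ⁻¹' Icc (T x) 1 = Icc 0 x := by
  ext u
  simp only [mem_inter_iff, mem_preimage]
  constructor
  · rintro ⟨hu, hxu, -⟩
    exact ⟨hu.1, hT.apply_apply x hx ▸ (hT.le_apply_iff (hT.mapsTo hx) hu).1 hxu⟩
  · intro hu
    have hu' : u ∈ Icc (0:ℝ) 1 := ⟨hu.1, hu.2.trans hx.2⟩
    exact ⟨hu', hT.antitoneOn hu' hx hu.2, (hT.mapsTo hu').2⟩

lemma inter_preimage_Iic (hT : IsReflection T) (hx : x ∈ Icc (0:ℝ) 1) :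
    Icc 0 1 ∩ T ⁻¹' Iic x = Icc (T x) 1 := by
  ext u
  simp only [mem_inter_iff, mem_preimage, mem_Iic]
  constructor
  · rintro ⟨hu, hux⟩
    exact ⟨(hT.apply_le_iff hx hu).1 hux, hu.2⟩
  · intro hu
    have hu' : u ∈ Icc (0:ℝ) 1 := ⟨(hT.mapsTo hx).1.trans hu.1, hu.2⟩
    exact ⟨hu', (hT.apply_le_iff hx hu').2 hu.1⟩

lemma inter_preimage_Icc_zero (hT : IsReflection T) (hx : x ∈ Icc (0:ℝ) 1) :
    Icc 0 1 ∩ T ⁻¹' Icc 0 x = Icc (T x) 1 := by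
  rw [← hT.inter_preimage_Iic hx]
  ext u
  exact ⟨fun h => ⟨h.1, h.2.2⟩, fun h => ⟨h.1, (hT.mapsTo h.1).1, h.2⟩⟩

lemma integralToOne_apply (hT : IsReflection T) (hTm : Measurable T)
    (hmap : (α.restrict (Icc 0 1)).map T = β) (hg : Measurable g) (hx : x ∈ Icc (0:ℝ) 1) :
    integralToOne β g (T x) = integralFromZero α (g ∘ T) x := by
  rw [integralToOne, setIntegral_eq_of_map_eq hTm hmap hg measurableSet_Icc,
    hT.inter_preimage_Icc_apply hx]
  rfl

lemma integralFromZero_comp (hT : IsReflection T) (hTm : Measurable T)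
    (hmap : (α.restrict (Icc 0 1)).map T = β) (hg : Measurable g) (hx : x ∈ Icc (0:ℝ) 1) :
    integralFromZero β (g ∘ T) x = integralToOne α g (T x) := by
  rw [integralFromZero, setIntegral_eq_of_map_eq hTm hmap (hg.comp hTm) measurableSet_Icc,
    hT.inter_preimage_Icc_zero hx]
  refine setIntegral_congr_fun measurableSet_Icc fun u hu => ?_
  rw [Function.comp_apply, hT.apply_apply u ⟨(hT.mapsTo hx).1.trans hu.1, hu.2⟩]

lemma eqOn_iterate_integralFromZero [SFinite α] [SFinite β] (hT : IsReflection T)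
    (hTm : Measurable T) (hmap : (α.restrict (Icc 0 1)).map T = β) (k : ℕ) :
    EqOn ((integralFromZero β ∘ integralFromZero α)^[k] 1)
      ((integralToOne α ∘ integralToOne β)^[k] 1 ∘ T) (Icc 0 1) := by
  induction k with
  | zero => exact fun _ _ => rfl
  | succ k ih =>
    have hm := measurable_iterate_integralToOne (α := α) (β := β) k
    have hstep : EqOn (integralFromZero α ((integralFromZero β ∘ integralFromZero α)^[k] 1))
        (integralToOne β ((integralToOne α ∘ integralToOne β)^[k] 1) ∘ T) (Icc 0 1) :=
      fun x hx => by
        rw [integralFromZero_congr ih hx.2, Function.comp_apply,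
          hT.integralToOne_apply hTm hmap hm hx]
    intro x hx
    rw [Function.iterate_succ_apply', Function.iterate_succ_apply', Function.comp_apply,
      Function.comp_apply, integralFromZero_congr hstep hx.2,
      hT.integralFromZero_comp hTm hmap (measurable_integralToOne hm) hx]
    rfl

lemma integralFromZero_iterate_one_eq_integralToOne_swap [SFinite α] [SFinite β]
    (hT : IsReflection T) (hTm : Measurable T) (hmap : (α.restrict (Icc 0 1)).map T = β) (k : ℕ) :
    integralFromZero α ((integralFromZero β ∘ integralFromZero α)^[k] 1) 1
      = integralToOne β ((integralToOne α ∘ integralToOne β)^[k] 1) 0 := by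
  rw [integralFromZero_congr (hT.eqOn_iterate_integralFromZero hTm hmap k) le_rfl,
    ← hT.integralToOne_apply hTm hmap (measurable_iterate_integralToOne k) ⟨zero_le_one, le_rfl⟩,
    hT.apply_one]

lemma integralFromZero_iterate_one_swap [IsFiniteMeasureOnCompacts α]
    [IsFiniteMeasureOnCompacts β] (hT : IsReflection T) (hTm : Measurable T)
    (hmap : (α.restrict (Icc 0 1)).map T = β) (k : ℕ) :
    integralFromZero α ((integralFromZero β ∘ integralFromZero α)^[k] 1) 1
      = integralFromZero β ((integralFromZero α ∘ integralFromZero β)^[k] 1) 1 := by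
  rw [hT.integralFromZero_iterate_one_eq_integralToOne_swap hTm hmap,
    integralFromZero_iterate_one_eq_integralToOne]

end IsReflection

lemma eqOn_zero_of_contraction {d : ℝ → ℝ} {r₁ r₂ a b C : ℝ} (hr₁ : 0 < r₁) (hr₂ : 0 < r₂)
    (hr : r₁ + r₂ = 1) (ha : |a| < 1) (hb : |b| < 1) (hC : ∀ x ∈ Icc (0:ℝ) 1, |d x| ≤ C)
    (h₁ : ∀ s ∈ Icc (0:ℝ) 1, d (r₁ * s) = a * d s)
    (h₂ : ∀ s ∈ Icc (0:ℝ) 1, d (r₂ * s + 1 - r₂) = b * d s) :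
    ∀ x ∈ Icc (0:ℝ) 1, d x = 0 := by
  set c := max |a| |b|
  have hstep : ∀ x ∈ Icc (0:ℝ) 1, ∃ s ∈ Icc (0:ℝ) 1, |d x| ≤ c * |d s| := by
    intro x hx
    rcases le_or_gt x r₁ with h | h
    · refine ⟨x / r₁, ⟨div_nonneg hx.1 hr₁.le, (div_le_one hr₁).2 h⟩, ?_⟩
      have := h₁ (x / r₁) ⟨div_nonneg hx.1 hr₁.le, (div_le_one hr₁).2 h⟩
      rw [mul_div_cancel₀ x hr₁.ne'] at this
      rw [this, abs_mul]
      gcongr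
      exact le_max_left _ _
    · have hs : (x - r₁) / r₂ ∈ Icc (0:ℝ) 1 :=
        ⟨div_nonneg (by linarith) hr₂.le, (div_le_one hr₂).2 (by linarith [hx.2])⟩
      refine ⟨_, hs, ?_⟩
      have := h₂ _ hs
      rw [mul_div_cancel₀ _ hr₂.ne', show x - r₁ + 1 - r₂ = x by linarith] at this
      rw [this, abs_mul]
      gcongr
      exact le_max_right _ _
  have hbound : ∀ n : ℕ, ∀ x ∈ Icc (0:ℝ) 1, |d x| ≤ c ^ n * C := by
    intro n
    induction n with
    | zero => simpa using hC
    | succ n ih =>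
      intro x hx
      obtain ⟨s, hs, hxs⟩ := hstep x hx
      calc |d x| ≤ c * |d s| := hxs
        _ ≤ c * (c ^ n * C) := by gcongr; exact ih s hs
        _ = c ^ (n + 1) * C := by ring
  have hlim : Tendsto (fun n : ℕ => c ^ n * C) atTop (𝓝 0) := by
    simpa using (tendsto_pow_atTop_nhds_zero_of_lt_one ((abs_nonneg a).trans (le_max_left _ _))
      (max_lt ha hb)).mul_const C
  intro x hx
  exact abs_nonpos_iff.1 (ge_of_tendsto' hlim fun n => hbound n x hx)

def IsSelfSimilar (μ : Measure ℝ) (r₁ r₂ m₁ m₂ : ℝ) : Prop :=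
  μ = ENNReal.ofReal m₁ • μ.map (fun x => r₁ * x)
    + ENNReal.ofReal m₂ • μ.map (fun x => r₂ * x + 1 - r₂)

lemma measurable_one_sub_cdf (μ : Measure ℝ) : Measurable fun t => 1 - cdf μ t :=
  measurable_const.sub (monotone_cdf μ).measurable

lemma isReflection_one_sub_cdf {μ : Measure ℝ}
    (hinv : ∀ t ∈ Icc (0:ℝ) 1, cdf μ (1 - cdf μ t) = 1 - t) :
    IsReflection fun t => 1 - cdf μ t where
  mapsTo t _ := ⟨sub_nonneg.2 (cdf_le_one μ t), by linarith [cdf_nonneg μ t]⟩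
  antitoneOn _ _ _ _ h := sub_le_sub_left (monotone_cdf μ h) 1
  apply_apply t ht := by simp only [hinv t ht, sub_sub_cancel]

variable {μ : Measure ℝ} [IsProbabilityMeasure μ]

lemma cdf_eq_zero_of_nonpos [NullSingletonClass μ] (hsupp : μ (Icc 0 1)ᶜ = 0) {x : ℝ}
    (hx : x ≤ 0) : cdf μ x = 0 := by
  have hIio : μ (Iio 0) = 0 :=
    measure_mono_null (fun t (ht : t < 0) h => (not_le.2 ht) (mem_Icc.1 h).1) hsupp
  have hIic : μ (Iic x) = 0 :=
    measure_mono_null (Iic_subset_Iic.2 hx) (by rwa [← measure_congr Iio_ae_eq_Iic])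
  rw [cdf_eq_real, measureReal_def, hIic, ENNReal.toReal_zero]

lemma cdf_eq_one_of_one_le (hsupp : μ (Icc 0 1)ᶜ = 0) {x : ℝ} (hx : 1 ≤ x) : cdf μ x = 1 := by
  have hcompl : μ (Iic x)ᶜ = 0 :=
    measure_mono_null (fun t ht h => ht ((mem_Icc.1 h).2.trans hx)) hsupp
  rw [cdf_eq_real, measureReal_def, (prob_compl_eq_zero_iff measurableSet_Iic).1 hcompl,
    ENNReal.toReal_one]

lemma cdf_eq_add {r₁ r₂ m₁ m₂ : ℝ} (hr₁ : 0 < r₁) (hr₂ : 0 < r₂) (hm₁ : 0 ≤ m₁) (hm₂ : 0 ≤ m₂)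
    (hss : IsSelfSimilar μ r₁ r₂ m₁ m₂) (y : ℝ) :
    cdf μ y = m₁ * cdf μ (y / r₁) + m₂ * cdf μ ((y - (1 - r₂)) / r₂) := by
  have h₁ : (fun x => r₁ * x) ⁻¹' Iic y = Iic (y / r₁) := by
    ext x
    simp only [mem_preimage, mem_Iic, le_div_iff₀ hr₁, mul_comm]
  have h₂ : (fun x => r₂ * x + 1 - r₂) ⁻¹' Iic y = Iic ((y - (1 - r₂)) / r₂) := by
    ext x
    simp only [mem_preimage, mem_Iic, le_div_iff₀ hr₂]
    constructor <;> intro h <;> linarith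
  have hμ : μ (Iic y) = ENNReal.ofReal m₁ * μ (Iic (y / r₁))
      + ENNReal.ofReal m₂ * μ (Iic ((y - (1 - r₂)) / r₂)) := by
    conv_lhs => rw [hss]
    rw [Measure.add_apply, Measure.smul_apply, Measure.smul_apply,
      Measure.map_apply (by fun_prop) measurableSet_Iic,
      Measure.map_apply (by fun_prop) measurableSet_Iic, h₁, h₂, smul_eq_mul, smul_eq_mul]
  simp only [cdf_eq_real, measureReal_def, hμ]
  rw [ENNReal.toReal_add (by finiteness) (by finiteness), ENNReal.toReal_mul, ENNReal.toReal_mul,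
    ENNReal.toReal_ofReal hm₁, ENNReal.toReal_ofReal hm₂]

lemma cdf_mul_of_mem [NullSingletonClass μ] (hsupp : μ (Icc 0 1)ᶜ = 0) {r₁ r₂ m₁ m₂ : ℝ}
    (hr₁ : 0 < r₁) (hr₂ : 0 < r₂) (hm₁ : 0 ≤ m₁) (hm₂ : 0 ≤ m₂) (hr : r₁ + r₂ ≤ 1)
    (hss : IsSelfSimilar μ r₁ r₂ m₁ m₂) {s : ℝ} (hs : s ∈ Icc (0:ℝ) 1) :
    cdf μ (r₁ * s) = m₁ * cdf μ s := by
  have hneg : (r₁ * s - (1 - r₂)) / r₂ ≤ 0 :=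
    div_nonpos_of_nonpos_of_nonneg (by nlinarith [hs.2]) hr₂.le
  rw [cdf_eq_add hr₁ hr₂ hm₁ hm₂ hss, mul_div_cancel_left₀ s hr₁.ne',
    cdf_eq_zero_of_nonpos hsupp hneg, mul_zero, add_zero]

lemma cdf_affine_of_mem (hsupp : μ (Icc 0 1)ᶜ = 0) {r₁ r₂ m₁ m₂ : ℝ}
    (hr₁ : 0 < r₁) (hr₂ : 0 < r₂) (hm₁ : 0 ≤ m₁) (hm₂ : 0 ≤ m₂) (hr : r₁ + r₂ ≤ 1)
    (hss : IsSelfSimilar μ r₁ r₂ m₁ m₂) {s : ℝ} (hs : s ∈ Icc (0:ℝ) 1) :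
    cdf μ (r₂ * s + 1 - r₂) = m₁ + m₂ * cdf μ s := by
  have hge : 1 ≤ (r₂ * s + 1 - r₂) / r₁ := by
    rw [le_div_iff₀ hr₁]
    nlinarith [hs.1]
  rw [cdf_eq_add hr₁ hr₂ hm₁ hm₂ hss, cdf_eq_one_of_one_le hsupp hge,
    show r₂ * s + 1 - r₂ - (1 - r₂) = r₂ * s by ring, mul_div_cancel_left₀ s hr₂.ne', mul_one]

lemma cdf_one_sub_cdf [NullSingletonClass μ] (hsupp : μ (Icc 0 1)ᶜ = 0) {r₁ r₂ : ℝ}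
    (hr₁ : 0 < r₁) (hr₂ : 0 < r₂) (hr : r₁ + r₂ = 1) (hss : IsSelfSimilar μ r₁ r₂ r₂ r₁) :
    ∀ t ∈ Icc (0:ℝ) 1, cdf μ (1 - cdf μ t) = 1 - t := by
  have hmem : ∀ t, 1 - cdf μ t ∈ Icc (0:ℝ) 1 :=
    fun t => ⟨sub_nonneg.2 (cdf_le_one μ t), by linarith [cdf_nonneg μ t]⟩
  have h₁ := fun {s} (hs : s ∈ Icc (0:ℝ) 1) =>
    cdf_mul_of_mem hsupp hr₁ hr₂ hr₂.le hr₁.le hr.le hss hs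
  have h₂ := fun {s} (hs : s ∈ Icc (0:ℝ) 1) =>
    cdf_affine_of_mem hsupp hr₁ hr₂ hr₂.le hr₁.le hr.le hss hs
  suffices hd : ∀ t ∈ Icc (0:ℝ) 1, cdf μ (1 - cdf μ t) - (1 - t) = 0 from
    fun t ht => sub_eq_zero.1 (hd t ht)
  refine eqOn_zero_of_contraction (d := fun t => cdf μ (1 - cdf μ t) - (1 - t)) (C := 2)
    (a := r₁) (b := r₂) hr₁ hr₂ hr (by rw [abs_lt]; constructor <;> linarith)
    (by rw [abs_lt]; constructor <;> linarith) (fun x hx => ?_) (fun s hs => ?_) (fun s hs => ?_)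
  · rw [abs_le]
    constructor <;> linarith [cdf_nonneg μ (1 - cdf μ x), cdf_le_one μ (1 - cdf μ x), hx.1, hx.2]
  · have harg : 1 - cdf μ (r₁ * s) = r₂ * (1 - cdf μ s) + 1 - r₂ := by
      rw [h₁ hs]; ring
    rw [harg, h₂ (hmem s)]
    linear_combination hr
  · have harg : 1 - cdf μ (r₂ * s + 1 - r₂) = r₁ * (1 - cdf μ s) := by
      rw [h₂ hs]; linear_combination -hr
    rw [harg, h₁ (hmem s)]
    ring

lemma map_one_sub_cdf [NullSingletonClass μ] (hsupp : μ (Icc 0 1)ᶜ = 0)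
    (hinv : ∀ t ∈ Icc (0:ℝ) 1, cdf μ (1 - cdf μ t) = 1 - t) :
    (volume.restrict (Icc 0 1)).map (fun t => 1 - cdf μ t) = μ := by
  have hT := isReflection_one_sub_cdf hinv
  have hTm := measurable_one_sub_cdf μ
  refine Measure.ext_of_Iic _ _ fun a => ?_
  rw [Measure.map_apply hTm measurableSet_Iic, Measure.restrict_apply (hTm measurableSet_Iic),
    ← ofReal_cdf, inter_comm]
  rcases lt_or_ge a 0 with ha | ha
  · have hempty : Icc 0 1 ∩ (fun t => 1 - cdf μ t) ⁻¹' Iic a = ∅ :=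
      eq_empty_of_forall_notMem fun u hu => not_le.2 (ha.trans_le (hT.mapsTo hu.1).1) hu.2
    rw [hempty, measure_empty, cdf_eq_zero_of_nonpos hsupp ha.le, ENNReal.ofReal_zero]
  rcases le_or_gt 1 a with ha1 | ha1
  · have hall : Icc 0 1 ∩ (fun t => 1 - cdf μ t) ⁻¹' Iic a = Icc 0 1 :=
      inter_eq_left.2 fun u hu => (hT.mapsTo hu).2.trans ha1
    rw [hall, Real.volume_Icc, cdf_eq_one_of_one_le hsupp ha1, sub_zero]
  · rw [hT.inter_preimage_Iic ⟨ha, ha1.le⟩, Real.volume_Icc, sub_sub_cancel]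

end SelfSimilarSine

end

open SelfSimilarSine

theorem stmt_19_general
    (μ : Measure ℝ) [IsProbabilityMeasure μ] [NullSingletonClass μ]
    (hsupp : μ (Set.Icc (0:ℝ) 1)ᶜ = 0)
    (r₁ r₂ m₁ m₂ : ℝ)
    (hr₁ : 0 < r₁) (hr₂ : 0 < r₂)
    (hmsum : m₁ + m₂ = 1)
    (hss : μ = ENNReal.ofReal m₁ • Measure.map (fun x => r₁ * x) μ
           + ENNReal.ofReal m₂ • Measure.map (fun x => r₂ * x + 1 - r₂) μ)
    (p q : ℕ → ℝ → ℝ)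
    (hp0 : ∀ x : ℝ, p 0 x = 1) (hq0 : ∀ x : ℝ, q 0 x = 1)
    (hpodd : ∀ (n : ℕ) (x : ℝ), p (2*n+1) x = ∫ t in Set.Icc (0:ℝ) x, p (2*n) t ∂μ)
    (hpeven : ∀ (n : ℕ) (x : ℝ), p (2*n+2) x = ∫ t in (0:ℝ)..x, p (2*n+1) t)
    (hqodd : ∀ (n : ℕ) (x : ℝ), q (2*n+1) x = ∫ t in (0:ℝ)..x, q (2*n) t)
    (hqeven : ∀ (n : ℕ) (x : ℝ), q (2*n+2) x = ∫ t in Set.Icc (0:ℝ) x, q (2*n+1) t ∂μ)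
    (sinN sinD : ℝ → ℝ)
    (hsinN : ∀ z : ℝ, sinN z = ∑' n : ℕ, (-1:ℝ)^n * z^(2*n+1) * p (2*n+1) 1)
    (hsinD : ∀ z : ℝ, sinD z = ∑' n : ℕ, (-1:ℝ)^n * z^(2*n+1) * q (2*n+1) 1)
    (h₁₂ : r₁ = m₂) (h₂₁ : r₂ = m₁) :
    (∀ n : ℕ, p (2*n+1) 1 = q (2*n+1) 1) ∧
    (∀ z : ℝ, sinN z = sinD z) ∧
    (∀ z : ℝ, 0 < z → (sinN z = 0 ↔ sinD z = 0)) := by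
  subst h₁₂ h₂₁
  have hinv := cdf_one_sub_cdf hsupp hr₁ hr₂ (by linarith) hss
  have hp := apply_odd_one_of_recursion hp0 (fun n x _ => hpodd n x)
    (fun n x hx => (hpeven n x).trans (intervalIntegral_eq_integralFromZero hx.1))
  have hq := apply_odd_one_of_recursion hq0
    (fun n x hx => (hqodd n x).trans (intervalIntegral_eq_integralFromZero hx.1))
    (fun n x _ => hqeven n x)
  have hpq : ∀ n : ℕ, p (2*n+1) 1 = q (2*n+1) 1 := fun n => by
    rw [hp, hq, (isReflection_one_sub_cdf hinv).integralFromZero_iterate_one_swap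
      (measurable_one_sub_cdf μ) (map_one_sub_cdf hsupp hinv)]
  have hsin : ∀ z : ℝ, sinN z = sinD z := fun z => by simp only [hsinN, hsinD, hpq]
  exact ⟨hpq, hsin, fun z _ => by rw [hsin z]⟩

theorem stmt_19
    (μ : Measure ℝ) [IsProbabilityMeasure μ] [NullSingletonClass μ]
    (hsupp : μ (Set.Icc (0:ℝ) 1)ᶜ = 0)
    (r₁ r₂ m₁ m₂ : ℝ)
    (hr₁ : 0 < r₁) (hr₂ : 0 < r₂) (hm₁ : 0 < m₁) (hm₂ : 0 < m₂)
    (hrsum : r₁ + r₂ ≤ 1) (hmsum : m₁ + m₂ = 1)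
    (hss : μ = ENNReal.ofReal m₁ • Measure.map (fun x => r₁ * x) μ
           + ENNReal.ofReal m₂ • Measure.map (fun x => r₂ * x + 1 - r₂) μ)
    (p q : ℕ → ℝ → ℝ)
    (hp0 : ∀ x : ℝ, p 0 x = 1) (hq0 : ∀ x : ℝ, q 0 x = 1)
    (hpodd : ∀ (n : ℕ) (x : ℝ), p (2*n+1) x = ∫ t in Set.Icc (0:ℝ) x, p (2*n) t ∂μ)
    (hpeven : ∀ (n : ℕ) (x : ℝ), p (2*n+2) x = ∫ t in (0:ℝ)..x, p (2*n+1) t)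
    (hqodd : ∀ (n : ℕ) (x : ℝ), q (2*n+1) x = ∫ t in (0:ℝ)..x, q (2*n) t)
    (hqeven : ∀ (n : ℕ) (x : ℝ), q (2*n+2) x = ∫ t in Set.Icc (0:ℝ) x, q (2*n+1) t ∂μ)
    (sinN sinD : ℝ → ℝ)
    (hsinN : ∀ z : ℝ, sinN z = ∑' n : ℕ, (-1:ℝ)^n * z^(2*n+1) * p (2*n+1) 1)
    (hsinD : ∀ z : ℝ, sinD z = ∑' n : ℕ, (-1:ℝ)^n * z^(2*n+1) * q (2*n+1) 1)
    (h₁₂ : r₁ = m₂) (h₂₁ : r₂ = m₁) :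
    (∀ n : ℕ, p (2*n+1) 1 = q (2*n+1) 1) ∧
    (∀ z : ℝ, sinN z = sinD z) ∧
    (∀ z : ℝ, 0 < z → (sinN z = 0 ↔ sinD z = 0)) :=
  stmt_19_general μ hsupp r₁ r₂ m₁ m₂ hr₁ hr₂ hmsum hss p q hp0 hq0 hpodd hpeven hqodd hqeven sinN
    sinD hsinN hsinD h₁₂ h₂₁
end
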